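/- arXiv:math/9308221 — 8 statements merged into one kernel-verified Lean document; each statement's English description precedes it below -/
import Mathlib

section
/- There is no countable K(ω)-free graph that weakly embeds every countable K(ω)-free graph. More precisely: if X = (V, E) is a graph on a countable vertex set V containing no infinite clique, then there exists a countable graph X' with no infinite clique that admits no injective edge-preserving map into X. -/
/-!
For a graph `G` without infinite cliques, the finite cliques ordered by inclusion have no infinite
strictly increasing chain, so each has an ordinal rank, and `∅` gets a rank `ρ(G)`. An injective
edge-preserving map `Y → X` maps finite cliques injectively and strictly monotonically, so
`ρ(Y) ≤ ρ(X)`. Now let `Y` be the comparability graph of the finite cliques of `X`: it is countable,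
its cliques are chains of cliques of `X` and so it has no infinite clique, and a finite chain
below a clique `s` of `X` has rank at least that of `s`; hence `ρ(X) < ρ(Y)`.
-/

universe u

theorem IsWellFounded.rank_le_rank_of_strictMono {α β : Type u} [Preorder α] [Preorder β]
    [WellFoundedGT α] [WellFoundedGT β] {f : α → β} (hf : StrictMono f) (a : α) :
    IsWellFounded.rank (· > ·) a ≤ IsWellFounded.rank (· > ·) (f a) := by
  induction a using WellFoundedGT.induction with
  | _ a ih =>
    rw [IsWellFounded.rank_eq]
    refine Ordinal.iSup_le fun ⟨b, hab⟩ => Order.succ_le_of_lt ?_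
    exact (ih b hab).trans_lt (WellFoundedGT.rank_strictAnti (hf hab))

namespace SimpleGraph

variable {α β : Type*}

def InfiniteCliqueFree (G : SimpleGraph α) : Prop :=
  ¬ ∃ s : Set α, G.IsClique s ∧ s.Infinite

abbrev FinClique (G : SimpleGraph α) : Type _ :=
  {s : Finset α // G.IsClique (s : Set α)}

instance (G : SimpleGraph α) : OrderBot G.FinClique :=
  Subtype.orderBot (by simp)

theorem IsClique.image_hom {G : SimpleGraph α} {H : SimpleGraph β} (φ : G →g H) {s : Set α}
    (hs : G.IsClique s) : H.IsClique (φ '' s) := by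
  rintro _ ⟨a, ha, rfl⟩ _ ⟨b, hb, rfl⟩ hab
  exact φ.map_adj (hs ha hb (ne_of_apply_ne φ hab))

namespace FinClique

variable {G : SimpleGraph α} {H : SimpleGraph β} [DecidableEq β]

def map (φ : G →g H) (s : G.FinClique) : H.FinClique :=
  ⟨s.1.image φ, by simpa only [Finset.coe_image] using s.2.image_hom φ⟩

@[simp]
theorem map_bot (φ : G →g H) : map φ ⊥ = ⊥ :=
  Subtype.ext (Finset.image_empty _)

theorem map_strictMono {φ : G →g H} (hφ : Function.Injective φ) : StrictMono (map φ) :=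
  fun _ _ h => (Finset.image_ssubset_image hφ).2 h

theorem exists_isClique_infinite_of_isChain {C : Set G.FinClique} (hC : IsChain (· ≤ ·) C)
    (hinf : C.Infinite) : ∃ s : Set α, G.IsClique s ∧ s.Infinite := by
  refine ⟨⋃ s ∈ C, (s.1 : Set α), ?_, fun hfin => hinf ?_⟩
  · intro x hx y hy hxy
    simp only [Set.mem_iUnion] at hx hy
    obtain ⟨s, hs, hxs⟩ := hx
    obtain ⟨t, ht, hyt⟩ := hy
    rcases eq_or_ne s t with rfl | hst
    · exact s.2 hxs hyt hxy
    rcases hC hs ht hst with h | h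
    · exact t.2 (h hxs) hyt hxy
    · exact s.2 hxs (h hyt) hxy
  · refine Set.Finite.of_finite_image (f := fun s : G.FinClique => (s.1 : Set α)) ?_ ?_
    · exact hfin.finite_subsets.subset <| Set.image_subset_iff.2 fun s hs =>
        Set.subset_biUnion_of_mem (u := fun s : G.FinClique => (s.1 : Set α)) hs
    · exact fun s _ t _ h => Subtype.ext (Finset.coe_injective h)

end FinClique

theorem InfiniteCliqueFree.wellFoundedGT_finClique {G : SimpleGraph α}
    (hG : G.InfiniteCliqueFree) : WellFoundedGT G.FinClique := by
  refine ⟨RelEmbedding.wellFounded_iff_isEmpty.2 ⟨fun f => hG ?_⟩⟩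
  have hf : StrictMono f := fun _ _ h => f.map_rel_iff.2 h
  exact FinClique.exists_isClique_infinite_of_isChain hf.monotone.isChain_range
    (Set.infinite_range_of_injective hf.injective)

abbrev comparabilityGraph (P : Type*) [Preorder P] : SimpleGraph P :=
  fromRel (· ≤ ·)

theorem isClique_comparabilityGraph_iff {P : Type*} [Preorder P] {s : Set P} :
    (comparabilityGraph P).IsClique s ↔ IsChain (· ≤ ·) s :=
  forall₅_congr fun _ _ _ _ hab => by simp [hab]

theorem InfiniteCliqueFree.comparabilityGraph_finClique {G : SimpleGraph α}
    (hG : G.InfiniteCliqueFree) : (comparabilityGraph G.FinClique).InfiniteCliqueFree :=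
  fun ⟨_, hS, hinf⟩ =>
    hG (FinClique.exists_isClique_infinite_of_isChain (isClique_comparabilityGraph_iff.1 hS) hinf)

section ComparabilityRank

variable {P : Type*} [Preorder P] [DecidableEq P] [WellFoundedGT P]
  [WellFoundedGT (comparabilityGraph P).FinClique]

theorem rank_le_rank_of_mem_upperBounds {s : P} {c : (comparabilityGraph P).FinClique}
    (hs : s ∈ upperBounds (c.1 : Set P)) :
    IsWellFounded.rank (· > ·) s ≤ IsWellFounded.rank (· > ·) c := by
  induction s using WellFoundedGT.induction generalizing c with
  | _ s ih =>
    rw [IsWellFounded.rank_eq]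
    refine Ordinal.iSup_le fun ⟨t, hst⟩ => Order.succ_le_of_lt ?_
    have ht : t ∈ upperBounds (c.1 : Set P) := fun a ha => (hs ha).trans hst.le
    have htc : t ∉ c.1 := fun h => hst.not_ge (hs h)
    have hclique : (comparabilityGraph P).IsClique (insert t c.1 : Finset P) := by
      rw [Finset.coe_insert]
      exact c.2.insert fun b hb htb => ⟨htb, Or.inr (ht hb)⟩
    let c' : (comparabilityGraph P).FinClique := ⟨insert t c.1, hclique⟩
    calc IsWellFounded.rank (· > ·) t ≤ IsWellFounded.rank (· > ·) c' :=
          ih t hst (by simpa [c', upperBounds_insert] using ht)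
      _ < IsWellFounded.rank (· > ·) c :=
          WellFoundedGT.rank_strictAnti (Finset.ssubset_insert htc)

theorem rank_lt_rank_bot_comparabilityGraph (s : P) :
    IsWellFounded.rank (· > ·) s <
      IsWellFounded.rank (· > ·) (⊥ : (comparabilityGraph P).FinClique) := by
  let c : (comparabilityGraph P).FinClique := ⟨{s}, by simp⟩
  calc IsWellFounded.rank (· > ·) s ≤ IsWellFounded.rank (· > ·) c :=
        rank_le_rank_of_mem_upperBounds (by simp [c])
    _ < IsWellFounded.rank (· > ·) (⊥ : (comparabilityGraph P).FinClique) :=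
        WellFoundedGT.rank_strictAnti (Finset.empty_ssubset.2 (Finset.singleton_nonempty s))

end ComparabilityRank

end SimpleGraph

open SimpleGraph

/-- There is no countable `K(ω)`-free graph weakly embedding all countable
`K(ω)`-free graphs: for any graph `X` on a countable vertex set with no infinite
clique, there is a countable graph `Y` with no infinite clique admitting no
injective edge-preserving map into `X`. -/
theorem stmt0 (V : Type) [Countable V] (X : SimpleGraph V)
    (hX : ¬ ∃ s : Set V, X.IsClique s ∧ s.Infinite) :
    ∃ (W : Type) (_ : Countable W) (Y : SimpleGraph W),
      (¬ ∃ s : Set W, Y.IsClique s ∧ s.Infinite) ∧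
      ¬ ∃ f : W → V, Function.Injective f ∧
        ∀ a b : W, Y.Adj a b → X.Adj (f a) (f b) := by
  classical
  have hX : X.InfiniteCliqueFree := hX
  have hY := hX.comparabilityGraph_finClique
  have := hX.wellFoundedGT_finClique
  have := hY.wellFoundedGT_finClique
  refine ⟨X.FinClique, inferInstance, comparabilityGraph X.FinClique, hY, ?_⟩
  rintro ⟨f, hf, hadj⟩
  let φ : comparabilityGraph X.FinClique →g X := ⟨f, hadj _ _⟩
  have hφ := IsWellFounded.rank_le_rank_of_strictMono (FinClique.map_strictMono (φ := φ) hf) ⊥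
  rw [FinClique.map_bot] at hφ
  exact (rank_lt_rank_bot_comparabilityGraph ⊥).not_ge hφ
end

section
/- Let λ be an infinite cardinal and κ an infinite cardinal with λ^{<κ} = λ. Then there is no graph X on vertex set λ with no clique of size κ that weakly embeds every graph on λ with no clique of size κ. (Galvin's lemma) -/
/-!
Galvin's diagonal argument. Given `X`, let `Y` be the graph on the sequences `s : Iio δ → V`
(`δ < κ`), where `s ~ t` when one of them properly end-extends the other and the longer one
enumerates a clique of `X`. Since `λ^{<κ} = λ`, `Y` lives on `λ` vertices. A clique of `Y` is a
chain under end-extension all of whose members but the shortest enumerate cliques of `X`, so its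
union is a clique of `X` of the same size: `Y` has no `κ`-clique when `X` has none. On the other
hand, a homomorphism `F : Y → X` yields the diagonal sequence `g δ = F (g ↾ δ)`, and by induction
every initial segment `g ↾ δ` enumerates a clique of `X`; hence `g ↾ β ~ g ↾ γ` for `β < γ`, so
`g` enumerates a `κ`-clique of `X`.
-/

open Cardinal Set Function

universe u

namespace SimpleGraph

variable {V : Type u} {G : SimpleGraph V} {κ : Cardinal.{u}}

def HasCliqueOfCard (G : SimpleGraph V) (κ : Cardinal.{u}) : Prop :=
  ∃ s : Set V, G.IsClique s ∧ #s = κ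

theorem hasCliqueOfCard_of_le {s : Set V} (hs : G.IsClique s) (h : κ ≤ #s) :
    G.HasCliqueOfCard κ := by
  obtain ⟨t, hts, rfl⟩ := le_mk_iff_exists_subset.1 h
  exact ⟨t, hs.subset hts, rfl⟩

theorem hasCliqueOfCard_of_top_hom {K : Type u} (f : (⊤ : SimpleGraph K) →g G) :
    G.HasCliqueOfCard #K :=
  ⟨range f, isClique_range_copy_top (f.toCopy f.injective_of_top_hom),
    mk_range_eq f f.injective_of_top_hom⟩

theorem HasCliqueOfCard.of_map {W : Type u} {f : V ↪ W} (hκ : 1 < κ)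
    (h : (G.map f).HasCliqueOfCard κ) : G.HasCliqueOfCard κ := by
  obtain ⟨t, ht, rfl⟩ := h
  rcases isClique_map_iff.1 ht with hsub | ⟨s, hs, rfl⟩
  · exact absurd (mk_le_one_iff_set_subsingleton.2 hsub) hκ.not_ge
  · exact ⟨s, hs, (mk_image_eq f.injective).symm⟩

end SimpleGraph

namespace Cardinal

theorem le_of_powerlt_eq_self {a b : Cardinal.{u}} (ha : 1 < a) (h : a ^< b = a) : b ≤ a := by
  by_contra! hlt
  exact (cantor' a ha).not_ge ((le_powerlt a hlt).trans_eq h)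

end Cardinal

namespace Galvin

open SimpleGraph

variable {K V : Type u} [LinearOrder K]

abbrev Seq (K V : Type u) [LinearOrder K] := Σ δ : K, (Iio δ → V)

def IsProperPrefix (s t : Seq K V) : Prop :=
  s.1 < t.1 ∧ ∀ β (hs : β < s.1) (ht : β < t.1), s.2 ⟨β, hs⟩ = t.2 ⟨β, ht⟩

def galvinGraph (K : Type u) [LinearOrder K] (X : SimpleGraph V) : SimpleGraph (Seq K V) :=
  fromRel fun s t => IsProperPrefix s t ∧ Pairwise (X.Adj on t.2)

theorem mk_seq_le (κ : Cardinal.{u}) (V : Type u) :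
    #(Seq κ.ord.ToType V) ≤ κ * #V ^< κ := by
  rw [mk_sigma]
  calc (sum fun δ : κ.ord.ToType => #(Iio δ → V)) ≤ sum fun _ : κ.ord.ToType => #V ^< κ :=
        sum_le_sum _ _ fun δ => by
          rw [← power_def]
          exact le_powerlt _ (by simpa using mk_Iio_lt δ (by simp))
    _ = κ * #V ^< κ := by rw [sum_const', mk_ord_toType]

variable {X : SimpleGraph V} {S : Set (Seq K V)} {s t : Seq K V}

theorem fst_ne_of_adj (h : (galvinGraph K X).Adj s t) : s.1 ≠ t.1 := by
  rcases (fromRel_adj _ _ _).1 h with ⟨-, h | h⟩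
  exacts [h.1.1.ne, h.1.1.ne']

theorem adj_of_fst_lt (h : (galvinGraph K X).Adj s t) (hlt : s.1 < t.1) :
    IsProperPrefix s t ∧ Pairwise (X.Adj on t.2) := by
  rcases (fromRel_adj _ _ _).1 h with ⟨-, h | h⟩
  exacts [h, absurd h.1.1 hlt.not_gt]

theorem snd_eq_of_isClique (hS : (galvinGraph K X).IsClique S) (hs : s ∈ S) (ht : t ∈ S) {β : K}
    (hβs : β < s.1) (hβt : β < t.1) : s.2 ⟨β, hβs⟩ = t.2 ⟨β, hβt⟩ := by
  rcases eq_or_ne s t with rfl | hne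
  · rfl
  rcases (fromRel_adj _ _ _).1 (hS hs ht hne) with ⟨-, ⟨⟨-, h⟩, -⟩ | ⟨⟨-, h⟩, -⟩⟩
  exacts [h β _ _, (h β _ _).symm]

theorem pairwise_adj_of_isClique (hS : (galvinGraph K X).IsClique S) (hs : s ∈ S) (ht : t ∈ S)
    (hlt : s.1 < t.1) : Pairwise (X.Adj on t.2) :=
  (adj_of_fst_lt (hS hs ht (ne_of_apply_ne Sigma.fst hlt.ne)) hlt).2

theorem hasCliqueOfCard_of_galvinGraph {κ : Cardinal.{u}} (hκ : ℵ₀ ≤ κ)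
    (h : (galvinGraph K X).HasCliqueOfCard κ) : X.HasCliqueOfCard κ := by
  obtain ⟨S, hS, hcard⟩ := h
  set T : Set (Seq K V) := {t ∈ S | ∃ u ∈ S, t.1 < u.1}
  have hT : κ ≤ #T := by
    have hrest : (S \ T).Subsingleton := by
      rintro a ⟨haS, ha⟩ b ⟨hbS, hb⟩
      by_contra hne
      rcases lt_or_gt_of_ne (fst_ne_of_adj (hS haS hbS hne)) with hlt | hlt
      exacts [ha ⟨haS, b, hbS, hlt⟩, hb ⟨hbS, a, haS, hlt⟩]
    by_contra! hlt
    have hrest_lt : #(S \ T : Set _) < κ :=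
      (mk_le_one_iff_set_subsingleton.2 hrest).trans_lt (one_lt_aleph0.trans_le hκ)
    exact ((le_mk_sdiff_add_mk S T).trans_lt (add_lt_of_lt hκ hrest_lt hlt)).ne hcard
  choose u huS hlt using fun t : T => t.2.2
  -- `ι t` is the entry at position `t.1` of the union of the chain `S`.
  let ι : T → V := fun t => (u t).2 ⟨t.1.1, hlt t⟩
  have hadj_of_le : ∀ t₁ t₂ : T, t₁.1.1 ≠ t₂.1.1 → (u t₁).1 ≤ (u t₂).1 →
      X.Adj (ι t₁) (ι t₂) := by
    intro t₁ t₂ hne hle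
    have hι₁ : ι t₁ = (u t₂).2 ⟨t₁.1.1, (hlt t₁).trans_le hle⟩ :=
      snd_eq_of_isClique hS (huS t₁) (huS t₂) _ _
    rw [hι₁]
    exact pairwise_adj_of_isClique hS t₂.2.1 (huS t₂) (hlt t₂) (Subtype.coe_ne_coe.1 hne)
  have hadj : ∀ t₁ t₂ : T, t₁ ≠ t₂ → X.Adj (ι t₁) (ι t₂) := by
    intro t₁ t₂ hne
    have hfst : t₁.1.1 ≠ t₂.1.1 :=
      fst_ne_of_adj (hS t₁.2.1 t₂.2.1 (Subtype.coe_ne_coe.2 hne))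
    rcases le_total (u t₁).1 (u t₂).1 with hle | hle
    exacts [hadj_of_le t₁ t₂ hfst hle, (hadj_of_le t₂ t₁ hfst.symm hle).symm]
  have hinj : Function.Injective ι := fun t₁ t₂ h => by
    by_contra hne
    exact (hadj _ _ hne).ne h
  refine hasCliqueOfCard_of_le (s := range ι) ?_ (by rwa [mk_range_eq ι hinj])
  rintro _ ⟨t₁, rfl⟩ _ ⟨t₂, rfl⟩ hne
  exact hadj _ _ (ne_of_apply_ne ι hne)

variable [WellFoundedLT K]

noncomputable def diagonal (F : Seq K V → V) : K → V :=
  wellFounded_lt.fix fun δ d => F ⟨δ, fun β => d β.1 β.2⟩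

theorem diagonal_eq (F : Seq K V → V) (δ : K) :
    diagonal F δ = F ⟨δ, fun β => diagonal F β⟩ :=
  wellFounded_lt.fix_eq _ _

theorem diagonal_adj (F : galvinGraph K X →g X) {β γ : K} (h : β < γ) :
    X.Adj (diagonal F β) (diagonal F γ) := by
  induction γ using WellFoundedLT.induction generalizing β with
  | ind γ IH =>
    have hclique : Pairwise (X.Adj on fun δ : Iio γ => diagonal F δ) := by
      intro δ ε hne
      rcases lt_or_gt_of_ne (Subtype.coe_ne_coe.2 hne) with hlt | hlt
      exacts [IH ε ε.2 hlt, (IH δ δ.2 hlt).symm]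
    rw [diagonal_eq F β, diagonal_eq F γ]
    refine F.map_adj ((fromRel_adj _ _ _).2 ⟨?_, Or.inl ⟨⟨h, fun _ _ _ => rfl⟩, hclique⟩⟩)
    exact ne_of_apply_ne Sigma.fst h.ne

noncomputable def diagonalHom (F : galvinGraph K X →g X) : (⊤ : SimpleGraph K) →g X where
  toFun := diagonal F
  map_rel' h := (lt_or_gt_of_ne h).elim (diagonal_adj F) fun h => (diagonal_adj F h).symm

end Galvin

open Galvin SimpleGraph in
/-- Galvin's lemma: if `λ^{<κ} = λ` (both infinite), there is no graph on a
vertex set of size `λ` with no clique of size `κ` that weakly embeds every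
graph on that vertex set with no clique of size `κ`. -/
theorem stmt1 (lam kappa : Cardinal) (hlam : ℵ₀ ≤ lam) (hkappa : ℵ₀ ≤ kappa)
    (h : lam ^< kappa = lam) :
    ¬ ∃ X : SimpleGraph (Quotient.out lam),
      (¬ ∃ s : Set (Quotient.out lam), X.IsClique s ∧ #s = kappa) ∧
      ∀ Y : SimpleGraph (Quotient.out lam),
        (¬ ∃ s : Set (Quotient.out lam), Y.IsClique s ∧ #s = kappa) →
        ∃ f : Quotient.out lam → Quotient.out lam, Function.Injective f ∧
          ∀ a b, Y.Adj a b → X.Adj (f a) (f b) := by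
  rintro ⟨X, hX, hU⟩
  have hkappa_le : kappa ≤ lam := le_of_powerlt_eq_self (one_lt_aleph0.trans_le hlam) h
  have hseq : #(Seq kappa.ord.ToType (Quotient.out lam)) ≤ #(Quotient.out lam) := by
    calc _ ≤ kappa * #(Quotient.out lam) ^< kappa := mk_seq_le _ _
      _ = #(Quotient.out lam) := by rw [mk_out, h, mul_eq_max hkappa hlam, max_eq_right hkappa_le]
  obtain ⟨e⟩ := hseq
  have hY : ¬ ((galvinGraph kappa.ord.ToType X).map e).HasCliqueOfCard kappa := fun hY =>
    hX (hasCliqueOfCard_of_galvinGraph hkappa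
      (HasCliqueOfCard.of_map (one_lt_aleph0.trans_le hkappa) hY))
  obtain ⟨f, -, hf⟩ := hU _ hY
  let F : galvinGraph kappa.ord.ToType X →g X := ⟨f ∘ e, fun hst => hf _ _ (map_adj_apply.2 hst)⟩
  exact hX (mk_ord_toType kappa ▸ hasCliqueOfCard_of_top_hom (diagonalHom F))
end

section
/- Fix an infinite cardinal κ, a K(κ)-free graph X on λ, and the graph Y of cliques-coded-as-functions as above (vertices: functions f with domain an ordinal < κ and range a clique of X, joined iff one strictly extends the other). Then for every injective edge-preserving map g from Y into X there exists a clique of size κ in X; hence no such g exists. -/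
open Cardinal

/-- Vertices of the graph `Y`: injective functions `f` whose domain is (the set
of elements below) an ordinal `α < κ` and whose range is a clique of `X`. -/
def FnVtx (kappa : Cardinal) {V : Type} (X : SimpleGraph V) : Type :=
  Σ a : kappa.ord.ToType,
    {f : {b : kappa.ord.ToType // b < a} → V //
      Function.Injective f ∧ X.IsClique (Set.range f)}

/-- `u` is strictly extended by `v`. -/
def FnExt (kappa : Cardinal) {V : Type} (X : SimpleGraph V)
    (u v : FnVtx kappa X) : Prop :=
  ∃ h : u.1 < v.1, ∀ b : {b : kappa.ord.ToType // b < u.1},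
    u.2.1 b = v.2.1 ⟨b.1, b.2.trans h⟩

/-- The graph `Y`: two vertices joined iff one strictly extends the other. -/
def fnGraph (kappa : Cardinal) {V : Type} (X : SimpleGraph V) :
    SimpleGraph (FnVtx kappa X) :=
  SimpleGraph.fromRel (FnExt kappa X)

/-! Feeding `g` its own earlier values, `x a := g (x ↾ a)` by transfinite recursion over `κ`,
keeps every restriction `x ↾ a` a vertex of `Y`: for `b < c` the vertex `x ↾ c` strictly extends
`x ↾ b`, so `x b` and `x c` are adjacent in `X`. Hence `x` is injective and its range is a
clique of `X` of size `κ`. -/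

namespace SimpleGraph

variable {ι V : Type*} [LinearOrder ι] {X : SimpleGraph V} {x : ι → V}

def topHomOfAdjOfLT (x : ι → V) (hx : ∀ ⦃b c⦄, b < c → X.Adj (x b) (x c)) :
    (⊤ : SimpleGraph ι) →g X where
  toFun := x
  map_rel' hbc := (lt_or_gt_of_ne hbc).elim (fun h => hx h) (fun h => (hx h).symm)

theorem injective_of_adj_of_lt (hx : ∀ ⦃b c⦄, b < c → X.Adj (x b) (x c)) :
    Function.Injective x :=
  Hom.injective_of_top_hom (topHomOfAdjOfLT x hx)

theorem isClique_range_of_adj_of_lt (hx : ∀ ⦃b c⦄, b < c → X.Adj (x b) (x c)) :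
    X.IsClique (Set.range x) :=
  isClique_range_copy_top ((topHomOfAdjOfLT x hx).toCopy (injective_of_adj_of_lt hx))

end SimpleGraph

namespace FnVtx

open SimpleGraph

variable {kappa : Cardinal} {V : Type} {X : SimpleGraph V}

def RestrictIsVtx (X : SimpleGraph V) (x : kappa.ord.ToType → V) (a : kappa.ord.ToType) : Prop :=
  Function.Injective (fun b : {b // b < a} => x b) ∧
    X.IsClique (Set.range fun b : {b // b < a} => x b)

def restrict (x : kappa.ord.ToType → V) (a : kappa.ord.ToType) (h : RestrictIsVtx X x a) :
    FnVtx kappa X :=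
  ⟨a, fun b => x b, h⟩

theorem restrictIsVtx_of_adj_of_lt {x : kappa.ord.ToType → V} {a : kappa.ord.ToType}
    (hx : ∀ ⦃b c⦄, b < c → c < a → X.Adj (x b) (x c)) : RestrictIsVtx X x a :=
  have hx' : ∀ ⦃b c : {b // b < a}⦄, b < c → X.Adj (x b) (x c) := fun _ c hbc => hx hbc c.2
  ⟨injective_of_adj_of_lt hx', isClique_range_of_adj_of_lt hx'⟩

theorem fnGraph_adj_restrict {x : kappa.ord.ToType → V} {a a' : kappa.ord.ToType}
    (h : RestrictIsVtx X x a) (h' : RestrictIsVtx X x a') (ha : a < a') :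
    (fnGraph kappa X).Adj (restrict x a h) (restrict x a' h') :=
  (fromRel_adj _ _ _).2 ⟨fun he => ha.ne (congrArg Sigma.fst he), .inl ⟨ha, fun _ => rfl⟩⟩

theorem nonempty (hkappa : kappa ≠ 0) : Nonempty (FnVtx kappa X) := by
  have : Nonempty kappa.ord.ToType := Ordinal.nonempty_toType_iff.2 (by simpa using hkappa)
  let := WellFoundedLT.toOrderBot kappa.ord.ToType
  have : IsEmpty {b : kappa.ord.ToType // b < ⊥} := ⟨fun b => not_lt_bot b.2⟩
  exact ⟨⟨⊥, isEmptyElim, isEmptyElim, by simp [Set.range_eq_empty]⟩⟩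

end FnVtx

section CliqueSeq

open FnVtx

variable {kappa : Cardinal} {V : Type} [Nonempty V] {X : SimpleGraph V}
  (g : FnVtx kappa X → V)

open Classical in
/-- The sequence `x a = g (x ↾ a)`; the default value is never reached when `g` maps edges to
edges (`restrictIsVtx_cliqueSeq`). -/
noncomputable def cliqueSeq : kappa.ord.ToType → V :=
  WellFoundedLT.fix fun a x =>
    if h : Function.Injective (fun b : {b // b < a} => x b b.2) ∧
        X.IsClique (Set.range fun b : {b // b < a} => x b b.2) then
      g ⟨a, _, h⟩
    else Classical.arbitrary V

variable {g}

theorem cliqueSeq_eq_restrict {a : kappa.ord.ToType} (h : RestrictIsVtx X (cliqueSeq g) a) :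
    cliqueSeq g a = g (restrict _ a h) := by
  unfold cliqueSeq
  rw [WellFoundedLT.fix_eq]
  exact dif_pos h

variable (hg : ∀ u v : FnVtx kappa X, (fnGraph kappa X).Adj u v → X.Adj (g u) (g v))
include hg

theorem restrictIsVtx_cliqueSeq (a : kappa.ord.ToType) : RestrictIsVtx X (cliqueSeq g) a := by
  induction a using WellFoundedLT.induction with
  | _ a ih =>
  refine restrictIsVtx_of_adj_of_lt fun b c hbc hca => ?_
  rw [cliqueSeq_eq_restrict (ih b (hbc.trans hca)), cliqueSeq_eq_restrict (ih c hca)]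
  exact hg _ _ (fnGraph_adj_restrict _ _ hbc)

theorem cliqueSeq_adj {b c : kappa.ord.ToType} (hbc : b < c) :
    X.Adj (cliqueSeq g b) (cliqueSeq g c) := by
  rw [cliqueSeq_eq_restrict (restrictIsVtx_cliqueSeq hg b),
    cliqueSeq_eq_restrict (restrictIsVtx_cliqueSeq hg c)]
  exact hg _ _ (fnGraph_adj_restrict _ _ hbc)

end CliqueSeq

theorem stmt3_general (kappa : Cardinal) (V : Type)
    (X : SimpleGraph V) (hX : ¬ ∃ s : Set V, X.IsClique s ∧ #s = kappa) :
    ¬ ∃ g : FnVtx kappa X → V, Function.Injective g ∧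
      ∀ u v : FnVtx kappa X, (fnGraph kappa X).Adj u v → X.Adj (g u) (g v) := by
  rintro ⟨g, -, hg⟩
  have hkappa : kappa ≠ 0 := by
    rintro rfl
    exact hX ⟨∅, X.isClique_empty, by simp⟩
  have : Nonempty V := (FnVtx.nonempty hkappa).map g
  have hadj : ∀ ⦃b c⦄, b < c → X.Adj (cliqueSeq g b) (cliqueSeq g c) :=
    fun _ _ => cliqueSeq_adj hg
  refine hX ⟨_, SimpleGraph.isClique_range_of_adj_of_lt hadj, ?_⟩
  rw [mk_range_eq _ (SimpleGraph.injective_of_adj_of_lt hadj), mk_ord_toType]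

/-- If `X` is `K(κ)`-free, then every injective edge-preserving map from `Y`
into `X` would produce a clique of size `κ` in `X`; hence no such map exists. -/
theorem stmt3 (kappa : Cardinal) (hkappa : ℵ₀ ≤ kappa) (V : Type)
    (X : SimpleGraph V) (hX : ¬ ∃ s : Set V, X.IsClique s ∧ #s = kappa) :
    ¬ ∃ g : FnVtx kappa X → V, Function.Injective g ∧
      ∀ u v : FnVtx kappa X, (fnGraph kappa X).Adj u v → X.Adj (g u) (g v) :=
  stmt3_general kappa V X hX
end

section
/- Let λ be a singular strong limit cardinal and κ ≤ λ with cf(κ) ≤ cf(λ). Then there is no weakly (λ,κ)-universal graph, i.e., no graph on λ with no κ-clique weakly embedding every graph on λ with no κ-clique. -/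
/-!
Transport the would-be universal graph `X` to a well-order of type `λ` and put `ν = cf κ`.
The nodes of a tree are the sequences, of length `< ν`, of bounded subsets of `λ`; as `λ` is a
strong limit and `ν ≤ cf λ` there are only `λ` of them. Blow each node of length `d` up to a
clique of size `ρ(d)⁺ < κ` and join vertices over distinct comparable nodes that are *good*:
their entries form a strictly increasing chain of cliques of `X`, the `d`-th of size `≥ ρ(d)`.
A `κ`-clique of this graph lies over a chain of good nodes: a short chain carries fewer than `κ`
vertices, and a chain of length `ν` yields a clique of `X` of size `≥ ν ⊔ sup ρ ≥ κ`.
On the other hand, an injective homomorphism into `X` lets one build a good branch of length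
`ν` by recursion: the `x`-th entry is everything the images of the blown-up nodes along the branch
have put into `X` so far, cut off at a bound chosen large enough to keep `ρ(x)` of it. Its
entries form a `κ`-clique of `X`.
-/

open Cardinal Ordinal Order Set

universe u

namespace Cardinal

theorem aleph0_le_cof_ord {c : Cardinal.{u}} (hc : ℵ₀ ≤ c) : ℵ₀ ≤ c.ord.cof :=
  aleph0_le_cof_iff.2 (one_lt_cof_iff.2 (isSuccLimit_ord hc))

theorem exists_forall_lt_of_mk_lt_cof {α ι : Type u} [LinearOrder α] (g : ι → α)
    (h : #ι < Order.cof α) : ∃ b, ∀ i, g i < b := by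
  by_contra! H
  have hg : IsCofinal (range g) := fun b ↦
    let ⟨i, hi⟩ := H b
    ⟨g i, mem_range_self i, hi⟩
  exact ((Order.cof_le hg).trans mk_range_le).not_gt h

theorem mk_sigma_le_of_forall_le {ι : Type u} {f : ι → Type u} {c : Cardinal.{u}} (hc : ℵ₀ ≤ c)
    (hι : #ι ≤ c) (hf : ∀ i, #(f i) ≤ c) : #(Σ i, f i) ≤ c :=
  calc #(Σ i, f i) ≤ #ι * c := by
        rw [mk_sigma, ← sum_const']; exact sum_le_sum _ _ hf
    _ ≤ c * c := by gcongr
    _ = c := mul_eq_self hc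

theorem sum_lt_of_lt_cof_ord {κ : Cardinal.{u}} (hκ : ℵ₀ ≤ κ) {ι : Type u} {f : ι → Cardinal.{u}}
    (hι : #ι < κ.ord.cof) (hf : ∀ i, f i < κ) : sum f < κ :=
  (sum_le_mk_mul_iSup f).trans_lt <|
    mul_lt_of_lt hκ (hι.trans_le (cof_ord_le κ)) (iSup_lt_of_lt_cof_ord hι hf)

/-- A map `β → α` is determined by its graph, a subset of `β × α` of size `#β`. -/
theorem power_le_self_of_lt_cof_ord {lam θ : Cardinal.{u}} (hlam : IsStrongLimit lam)
    (hθ : θ < lam.ord.cof) : lam ^ θ ≤ lam := by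
  rcases eq_or_ne θ 0 with rfl | hθ₀
  · simpa using Cardinal.one_le_iff_ne_zero.2 hlam.ne_zero
  induction lam, θ using inductionOn₂ with | _ α β
  have hprod : #(β × α) = #α := by
    rw [mk_prod, lift_id, lift_id]
    exact mul_eq_right hlam.aleph0_le (hθ.le.trans (cof_ord_le _)) hθ₀
  have hgraph : Function.Injective fun f : β → α ↦
      (⟨range fun b ↦ (b, f b), by rw [hprod]; exact mk_range_le.trans_lt hθ⟩ :
        {s : Set (β × α) // #s < (#(β × α)).ord.cof}) := by
    intro f g hfg
    funext b
    replace hfg : range (fun b ↦ (b, f b)) = range fun b ↦ (b, g b) := congrArg Subtype.val hfg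
    obtain ⟨b', hb'⟩ := hfg ▸ mem_range_self (f := fun b ↦ (b, f b)) b
    simp only [Prod.mk.injEq] at hb'
    rw [← hb'.2, hb'.1]
  rw [power_def]
  refine (mk_le_of_injective hgraph).trans_eq ?_
  rw [mk_subset_mk_lt_cof (by rw [hprod]; exact hlam.isStrongPrelimit), hprod]

/-- Cover `κ` by the initial segments below a cofinal subset of size `cf κ`. -/
theorem exists_forall_lt_le_cof_sup (κ : Cardinal.{u}) (hκ : ℵ₀ ≤ κ) :
    ∃ ρ : κ.ord.cof.ord.ToType → Cardinal.{u}, (∀ x, ρ x < κ) ∧ κ ≤ κ.ord.cof ⊔ ⨆ x, ρ x := by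
  have := noMaxOrder hκ
  obtain ⟨s, hs, hsκ⟩ := Order.exists_cof_eq κ.ord.ToType
  rw [cof_toType] at hsκ
  obtain ⟨e⟩ : Nonempty (κ.ord.cof.ord.ToType ≃ s) := Cardinal.eq.1 (by rw [mk_ord_toType, hsκ])
  refine ⟨fun x ↦ #(Iio (e x).1), fun x ↦ by simpa using mk_Iio_lt (e x).1, ?_⟩
  have hcover : (Set.univ : Set κ.ord.ToType) ⊆ ⋃ x, Iio (e x).1 := by
    intro a _
    obtain ⟨b, hab⟩ := exists_gt a
    obtain ⟨c, hc, hbc⟩ := hs b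
    exact mem_iUnion.2 ⟨e.symm ⟨c, hc⟩, by simpa using hab.trans_le hbc⟩
  calc κ = #(Set.univ : Set κ.ord.ToType) := by simp
    _ ≤ #(⋃ x, Iio (e x).1) := mk_le_mk_of_subset hcover
    _ ≤ κ.ord.cof * ⨆ x, #(Iio (e x).1) := by
        simpa using mk_iUnion_le fun x ↦ Iio (e x).1
    _ ≤ _ := mul_le_max_of_aleph0_le_left (aleph0_le_cof_ord hκ)

/-- The sizes of the cliques along the branches of the tree: `succ (ρ x) < κ` keeps each
blown-up node small, `κ ≤ cf κ ⊔ sup ρ` makes a full branch large, and the last condition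
lets each step of a branch be cut off at a bounded set (see `exists_le_mk_inter_Iio`). -/
theorem exists_levelSizes {κ μ : Cardinal.{u}} (hκ : ℵ₀ ≤ κ) (hμ : κ.ord.cof ≤ μ) :
    ∃ ρ : κ.ord.cof.ord.ToType → Cardinal.{u}, (∀ x, succ (ρ x) < κ) ∧
      κ ≤ κ.ord.cof ⊔ ⨆ x, ρ x ∧ (κ ≤ μ ∨ ∀ x, μ ≤ ρ x) := by
  rcases isRegular_or_isSingular hκ with hreg | hsing
  · refine ⟨0, fun _ ↦ ?_, by simp [hreg.cof_ord], Or.inl (hreg.cof_ord ▸ hμ)⟩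
    simpa using one_lt_aleph0.trans_le hκ
  obtain ⟨ρ, hρ, hκρ⟩ := exists_forall_lt_le_cof_sup κ hκ
  rcases le_or_gt κ μ with hκμ | hμκ
  · exact ⟨ρ, fun x ↦ hsing.isSuccLimit.succ_lt (hρ x), hκρ, Or.inl hκμ⟩
  refine ⟨fun x ↦ ρ x ⊔ μ, fun x ↦ hsing.isSuccLimit.succ_lt (max_lt (hρ x) hμκ), ?_,
    Or.inr fun x ↦ le_sup_right⟩
  exact hκρ.trans (sup_le_sup_left (ciSup_mono bddAbove_of_small fun x ↦ le_sup_left) _)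

/-- Otherwise `W` is covered by `cf lam` initial segments, each meeting it in fewer than `θ`
points. -/
theorem exists_le_mk_inter_Iio {lam θ : Cardinal.{u}} (hlam : ℵ₀ ≤ lam)
    {W : Set lam.ord.ToType} (hθW : θ < #W) (h : #W < lam.ord.cof ∨ lam.ord.cof ≤ θ) :
    ∃ b, θ ≤ #(W ∩ Iio b : Set lam.ord.ToType) := by
  rcases h with hW | hθ
  · obtain ⟨b, hb⟩ := exists_forall_lt_of_mk_lt_cof (Subtype.val : W → _) (by rwa [cof_toType])
    refine ⟨b, ?_⟩
    rw [inter_eq_left.2 fun w hw ↦ hb ⟨w, hw⟩]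
    exact hθW.le
  by_contra! H
  have := noMaxOrder hlam
  obtain ⟨S, hS, hSμ⟩ := Order.exists_cof_eq lam.ord.ToType
  rw [cof_toType] at hSμ
  have hcover : W ⊆ ⋃ c : S, W ∩ Iio c.1 := by
    intro w hw
    obtain ⟨a, hwa⟩ := exists_gt w
    obtain ⟨c, hc, hac⟩ := hS a
    exact mem_iUnion.2 ⟨⟨c, hc⟩, hw, hwa.trans_le hac⟩
  have hμ : ℵ₀ ≤ lam.ord.cof := aleph0_le_cof_ord hlam
  refine hθW.not_ge ((mk_le_mk_of_subset hcover).trans (mk_iUnion_le_sum_mk.trans ?_))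
  calc (sum fun c : S ↦ #(W ∩ Iio c.1 : Set _)) ≤ #S * θ := by
        rw [← sum_const']; exact sum_le_sum _ _ fun c ↦ (H c).le
    _ = θ := by rw [hSμ]; exact mul_eq_right (hμ.trans hθ) hθ (ne_of_gt (aleph0_pos.trans_le hμ))

end Cardinal

namespace SimpleGraph

theorem exists_isClique_mk_eq_of_map {V W : Type u} {G : SimpleGraph V} (f : V ↪ W)
    {κ : Cardinal.{u}} (hκ : 1 < κ) (h : ∃ t, (G.map f).IsClique t ∧ #t = κ) :
    ∃ s, G.IsClique s ∧ #s = κ := by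
  obtain ⟨t, ht, rfl⟩ := h
  have : t.Nontrivial := nontrivial_coe_sort.1 (one_lt_iff_nontrivial.1 hκ)
  obtain ⟨s, hs, rfl⟩ := (isClique_map_iff_of_nontrivial this).1 ht
  exact ⟨s, hs, (mk_image_eq f.injective).symm⟩

theorem le_mk_iUnion_of_strictMono {ι α : Type u} [LinearOrder ι] [SuccOrder ι] [NoMaxOrder ι]
    {m : ι → Set α} (hm : StrictMono m) : #ι ≤ #(⋃ i, m i) := by
  choose w hw using fun i ↦ exists_of_ssubset (hm (lt_succ i))
  have hne : ∀ {i j}, i < j → w i ≠ w j := fun {i j} hij h ↦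
    (hw j).2 (h ▸ hm.monotone (succ_le_of_lt hij) (hw i).1)
  refine mk_le_of_injective (f := fun i ↦ ⟨w i, mem_iUnion.2 ⟨_, (hw i).1⟩⟩) fun i j h ↦ ?_
  by_contra hij
  rcases lt_or_gt_of_ne hij with hij | hij
  · exact hne hij (congrArg Subtype.val h)
  · exact hne hij (congrArg Subtype.val h).symm

theorem exists_isClique_mk_eq_of_strictMono {V : Type u} (X : SimpleGraph V)
    {κ ν : Cardinal.{u}} (hν : ℵ₀ ≤ ν) {ρ : ν.ord.ToType → Cardinal.{u}}
    (hκρ : κ ≤ ν ⊔ ⨆ x, ρ x) {m : ν.ord.ToType → Set V} (hcl : ∀ x, X.IsClique (m x))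
    (hρm : ∀ x, ρ x ≤ #(m x)) (hm : StrictMono m) : ∃ s, X.IsClique s ∧ #s = κ := by
  have := noMaxOrder hν
  have hK : X.IsClique (⋃ x, m x) := (isClique_iUnion hm.monotone.directed_le).2 hcl
  have hκK : κ ≤ #(⋃ x, m x) := hκρ.trans <| sup_le
    (by simpa using le_mk_iUnion_of_strictMono hm)
    (ciSup_le' fun x ↦ (hρm x).trans (mk_le_mk_of_subset (subset_iUnion m x)))
  obtain ⟨s, hsK, hs⟩ := le_mk_iff_exists_subset.1 hκK
  exact ⟨s, hK.subset hsK, hs⟩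

end SimpleGraph

namespace WeaklyUniversalGraph

variable {ν lam : Cardinal.{u}}

abbrev BoundedSet (lam : Cardinal.{u}) : Type u := {A : Set lam.ord.ToType // Bounded (· < ·) A}

abbrev Node (ν lam : Cardinal.{u}) : Type u := Σ d : ν.ord.ToType, (Iio d → BoundedSet lam)

namespace Node

def restrict (s : Node ν lam) (z : ν.ord.ToType) (hz : z ≤ s.1) : Node ν lam :=
  ⟨z, fun y ↦ s.2 ⟨y, lt_of_lt_of_le y.2 hz⟩⟩

def IsPrefix (s t : Node ν lam) : Prop :=
  ∃ h : s.1 ≤ t.1, ∀ y : Iio s.1, s.2 y = t.2 ⟨y, lt_of_lt_of_le y.2 h⟩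

theorem isPrefix_refl (s : Node ν lam) : s.IsPrefix s := ⟨le_rfl, fun _ ↦ rfl⟩

theorem IsPrefix.eq_of_fst_eq {s t : Node ν lam} (h : s.IsPrefix t) (he : s.1 = t.1) : s = t := by
  obtain ⟨d, f⟩ := s
  obtain ⟨d', f'⟩ := t
  obtain rfl : d = d' := he
  exact congrArg _ (funext h.2)

structure IsGood (X : SimpleGraph lam.ord.ToType) (ρ : ν.ord.ToType → Cardinal.{u})
    (s : Node ν lam) : Prop where
  isClique : ∀ y, X.IsClique (s.2 y : Set lam.ord.ToType)
  le_mk : ∀ y : Iio s.1, ρ y ≤ #(s.2 y)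
  strictMono : StrictMono fun y : Iio s.1 ↦ (s.2 y : Set lam.ord.ToType)

variable {X : SimpleGraph lam.ord.ToType} {ρ : ν.ord.ToType → Cardinal.{u}}

theorem ssubset_of_comparable {s t : Node ν lam} (hs : s.IsGood X ρ) (ht : t.IsGood X ρ)
    (hst : s.IsPrefix t ∨ t.IsPrefix s) {x y : ν.ord.ToType} (hx : x < s.1) (hy : y < t.1)
    (hxy : x < y) : (s.2 ⟨x, hx⟩ : Set lam.ord.ToType) ⊂ t.2 ⟨y, hy⟩ := by
  rcases hst with hst | hts
  · rw [hst.2 ⟨x, hx⟩]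
    exact ht.strictMono (show x < y from hxy)
  · rw [hts.2 ⟨y, hy⟩]
    exact hs.strictMono (show x < y from hxy)

end Node

open Node

abbrev TreeVertex (lam : Cardinal.{u}) (ρ : ν.ord.ToType → Cardinal.{u}) : Type u :=
  Σ s : Node ν lam, (succ (ρ s.1)).ord.ToType

def treeGraph (X : SimpleGraph lam.ord.ToType) (ρ : ν.ord.ToType → Cardinal.{u}) :
    SimpleGraph (TreeVertex lam ρ) where
  Adj p q := p ≠ q ∧ p.1.IsGood X ρ ∧ q.1.IsGood X ρ ∧ (p.1.IsPrefix q.1 ∨ q.1.IsPrefix p.1)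
  symm := ⟨fun _ _ h ↦ ⟨h.1.symm, h.2.2.1, h.2.1, h.2.2.2.symm⟩⟩
  loopless := ⟨fun _ h ↦ h.1 rfl⟩

theorem mk_boundedSet (hlam : IsStrongLimit lam) : #(BoundedSet lam) = lam := by
  rw [mk_bounded_subset (by simpa using hlam.isStrongPrelimit) (by simp), mk_ord_toType]

theorem mk_node_le (hlam : IsStrongLimit lam) (hνlam : ν ≤ lam.ord.cof) :
    #(Node ν lam) ≤ lam := by
  refine mk_sigma_le_of_forall_le hlam.aleph0_le ?_ fun d ↦ ?_
  · rw [mk_ord_toType]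
    exact hνlam.trans (cof_ord_le lam)
  · rw [← power_def, mk_boundedSet hlam]
    exact power_le_self_of_lt_cof_ord hlam
      ((show #(Iio d) < ν by simpa using mk_Iio_lt d).trans_le hνlam)

theorem mk_treeVertex_le (hlam : IsStrongLimit lam) (hνlam : ν ≤ lam.ord.cof)
    {ρ : ν.ord.ToType → Cardinal.{u}} (hρ : ∀ x, succ (ρ x) ≤ lam) :
    #(TreeVertex lam ρ) ≤ lam :=
  mk_sigma_le_of_forall_le hlam.aleph0_le (mk_node_le hlam hνlam) fun s ↦ by
    rw [mk_ord_toType]; exact hρ s.1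

section CliqueFree

variable {κ : Cardinal.{u}} {X : SimpleGraph lam.ord.ToType} {ρ : ν.ord.ToType → Cardinal.{u}}

theorem exists_isClique_of_forall_exists_lt (hν : ℵ₀ ≤ ν) (hκρ : κ ≤ ν ⊔ ⨆ x, ρ x)
    {C : Set (Node ν lam)} (hgood : ∀ s ∈ C, s.IsGood X ρ)
    (hcomp : ∀ s ∈ C, ∀ t ∈ C, s.IsPrefix t ∨ t.IsPrefix s) (hC : ∀ x, ∃ s ∈ C, x < s.1) :
    ∃ K, X.IsClique K ∧ #K = κ := by
  choose t htC hxt using hC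
  exact SimpleGraph.exists_isClique_mk_eq_of_strictMono X hν hκρ
    (m := fun x ↦ ((t x).2 ⟨x, hxt x⟩ : Set lam.ord.ToType))
    (fun x ↦ (hgood _ (htC x)).isClique _) (fun x ↦ (hgood _ (htC x)).le_mk _)
    fun x y hxy ↦ ssubset_of_comparable (hgood _ (htC x)) (hgood _ (htC y))
      (hcomp _ (htC x) _ (htC y)) _ _ hxy

theorem treeGraph_not_exists_isClique (hX : ¬∃ K, X.IsClique K ∧ #K = κ) (hκ : ℵ₀ ≤ κ)
    (hν : ℵ₀ ≤ ν) (hνκ : ν ≤ κ.ord.cof) (hρ : ∀ x, succ (ρ x) < κ)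
    (hκρ : κ ≤ ν ⊔ ⨆ x, ρ x) : ¬∃ S, (treeGraph X ρ).IsClique S ∧ #S = κ := by
  rintro ⟨S, hS, hSκ⟩
  have hnt : S.Nontrivial :=
    nontrivial_coe_sort.1 (one_lt_iff_nontrivial.1 (hSκ ▸ one_lt_aleph0.trans_le hκ))
  have hcomp : ∀ p ∈ S, ∀ q ∈ S, p.1.IsPrefix q.1 ∨ q.1.IsPrefix p.1 := by
    intro p hp q hq
    rcases eq_or_ne p q with rfl | hpq
    · exact Or.inl (isPrefix_refl _)
    · exact (hS hp hq hpq).2.2.2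
  by_cases hC : ∀ x, ∃ s ∈ Sigma.fst '' S, x < s.1
  · refine hX (exists_isClique_of_forall_exists_lt hν hκρ ?_ ?_ hC)
    · rintro _ ⟨p, hp, rfl⟩
      obtain ⟨q, hq, hqp⟩ := hnt.exists_ne p
      exact (hS hp hq hqp.symm).2.1
    · rintro _ ⟨p, hp, rfl⟩ _ ⟨q, hq, rfl⟩
      exact hcomp p hp q hq
  push Not at hC
  obtain ⟨ℓ, hℓ⟩ := hC
  -- Comparable nodes of equal length coincide, so `S` injects into the vertices over levels `≤ ℓ`.
  let g : S → Σ y : Iic ℓ, (succ (ρ y)).ord.ToType := fun p ↦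
    ⟨⟨p.1.1.1, hℓ _ ⟨p.1, p.2, rfl⟩⟩, p.1.2⟩
  have hg : Function.Injective g := by
    rintro ⟨⟨s, i⟩, hp⟩ ⟨⟨t, j⟩, hq⟩ h
    obtain ⟨hst, hij⟩ := Sigma.mk.inj_iff.1 h
    replace hst : s.1 = t.1 := congrArg Subtype.val hst
    obtain rfl : s = t := (hcomp _ hp _ hq).elim (·.eq_of_fst_eq hst)
      fun h ↦ (h.eq_of_fst_eq hst.symm).symm
    exact Subtype.ext (Sigma.ext rfl hij)
  refine (mk_le_of_injective hg).not_gt ?_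
  rw [hSκ, mk_sigma]
  refine sum_lt_of_lt_cof_ord hκ ?_ fun y ↦ by simpa using hρ y
  exact (show #(Iic ℓ) < ν by simpa using mk_Iic_lt ℓ (by simp) (by simpa)).trans_le hνκ

end CliqueFree

section Branch

variable {κ : Cardinal.{u}} {ρ : ν.ord.ToType → Cardinal.{u}}
  (F : TreeVertex lam ρ → lam.ord.ToType)

def gadget (s : Node ν lam) : Set lam.ord.ToType := range fun i ↦ F ⟨s, i⟩

def accumulated (s : Node ν lam) : Set lam.ord.ToType :=
  ⋃ z : Iic s.1, gadget F (s.restrict z z.2)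

theorem mk_gadget (hF : Function.Injective F) (s : Node ν lam) :
    #(gadget F s) = succ (ρ s.1) := by
  rw [gadget, mk_range_eq (fun i ↦ F ⟨s, i⟩) (hF.comp sigma_mk_injective), mk_ord_toType]

theorem gadget_nonempty (hF : Function.Injective F) (s : Node ν lam) : (gadget F s).Nonempty :=
  nonempty_coe_sort.1 <| mk_ne_zero_iff.1 <| by
    rw [mk_gadget F hF]; exact (Cardinal.succ_pos _).ne'

theorem disjoint_gadget (hF : Function.Injective F) {s t : Node ν lam} (h : s ≠ t) :
    Disjoint (gadget F s) (gadget F t) :=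
  disjoint_left.2 fun _ ⟨_, hi⟩ ⟨_, hj⟩ ↦ h (congrArg Sigma.fst (hF (hi.trans hj.symm)))

theorem gadget_subset_accumulated (s : Node ν lam) : gadget F s ⊆ accumulated F s :=
  subset_iUnion_of_subset ⟨s.1, le_refl s.1⟩ subset_rfl

theorem mk_accumulated_lt (hF : Function.Injective F) (hκ : ℵ₀ ≤ κ) (hν : ℵ₀ ≤ ν)
    (hνκ : ν ≤ κ.ord.cof) (hρ : ∀ x, succ (ρ x) < κ) (s : Node ν lam) :
    #(accumulated F s) < κ := by
  refine mk_iUnion_le_sum_mk.trans_lt (sum_lt_of_lt_cof_ord hκ ?_ fun z ↦ ?_)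
  · exact (show #(Iic s.1) < ν by simpa using mk_Iic_lt s.1 (by simp) (by simpa)).trans_le hνκ
  · rw [mk_gadget F hF]; exact hρ _

theorem exists_bound (hlam : IsStrongLimit lam) (hκ : ℵ₀ ≤ κ) (hν : ℵ₀ ≤ ν)
    (hνκ : ν ≤ κ.ord.cof) (hνlam : ν ≤ lam.ord.cof) (hρ : ∀ x, succ (ρ x) < κ)
    (hρlam : κ ≤ lam.ord.cof ∨ ∀ x, lam.ord.cof ≤ ρ x) (hF : Function.Injective F)
    (s : Node ν lam) :
    ∃ b, (∀ y, (s.2 y : Set lam.ord.ToType) ⊆ Iio b) ∧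
      ρ s.1 ≤ #(accumulated F s ∩ Iio b : Set lam.ord.ToType) ∧ (gadget F s ∩ Iio b).Nonempty := by
  have := noMaxOrder hlam.aleph0_le
  obtain ⟨b₁, hb₁⟩ := exists_forall_lt_of_mk_lt_cof (fun y : Iio s.1 ↦ (s.2 y).2.choose) <| by
    rw [cof_toType]
    exact (show #(Iio s.1) < ν by simpa using mk_Iio_lt s.1).trans_le hνlam
  have hρW : ρ s.1 < #(accumulated F s) := (lt_succ _).trans_le <|
    mk_gadget F hF s ▸ mk_le_mk_of_subset (gadget_subset_accumulated F s)
  obtain ⟨b₂, hb₂⟩ := exists_le_mk_inter_Iio hlam.aleph0_le hρW <|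
    hρlam.imp (mk_accumulated_lt F hF hκ hν hνκ hρ s).trans_le (· s.1)
  obtain ⟨v, hv⟩ := gadget_nonempty F hF s
  obtain ⟨b₃, hb₃⟩ := exists_gt v
  refine ⟨max (max b₁ b₂) b₃, fun y w hw ↦ ?_, ?_, v, hv, ?_⟩
  · exact ((s.2 y).2.choose_spec w hw).trans
      ((hb₁ y).trans_le (le_max_of_le_left (le_max_left _ _)))
  · exact hb₂.trans (mk_le_mk_of_subset (inter_subset_inter_right _
      (Iio_subset_Iio (le_max_of_le_left (le_max_right _ _)))))
  · exact hb₃.trans_le (le_max_right _ _)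

variable (b : Node ν lam → lam.ord.ToType)

noncomputable def branch : ν.ord.ToType → BoundedSet lam :=
  WellFoundedLT.fix fun x IH ↦
    ⟨accumulated F ⟨x, fun y ↦ IH y y.2⟩ ∩ Iio (b ⟨x, fun y ↦ IH y y.2⟩), _, fun _ h ↦ h.2⟩

noncomputable def stage (x : ν.ord.ToType) : Node ν lam := ⟨x, fun y ↦ branch F b y⟩

theorem branch_eq (x : ν.ord.ToType) :
    (branch F b x : Set lam.ord.ToType) = accumulated F (stage F b x) ∩ Iio (b (stage F b x)) := by
  rw [branch, WellFoundedLT.fix_eq]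
  rfl

theorem accumulated_stage_mono {z x : ν.ord.ToType} (h : z ≤ x) :
    accumulated F (stage F b z) ⊆ accumulated F (stage F b x) :=
  iUnion_subset fun y ↦ subset_iUnion_of_subset ⟨y, y.2.trans h⟩ subset_rfl

theorem branch_subset_accumulated (x : ν.ord.ToType) :
    (branch F b x : Set lam.ord.ToType) ⊆ accumulated F (stage F b x) := by
  rw [branch_eq]; exact inter_subset_left

variable {F b}

theorem le_mk_branch (hmk : ∀ s, ρ s.1 ≤ #(accumulated F s ∩ Iio (b s) : Set lam.ord.ToType))
    (x : ν.ord.ToType) : ρ x ≤ #(branch F b x : Set lam.ord.ToType) := by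
  rw [branch_eq]
  exact hmk _

/-- Strictness comes from the gadget of the current stage, which is disjoint from all earlier
gadgets. -/
theorem branch_strictMono (hF : Function.Injective F)
    (hbound : ∀ s y, (s.2 y : Set lam.ord.ToType) ⊆ Iio (b s))
    (hgadget : ∀ s, (gadget F s ∩ Iio (b s)).Nonempty) :
    StrictMono fun x ↦ (branch F b x : Set lam.ord.ToType) := by
  intro y x hyx
  have hsub : (branch F b y : Set lam.ord.ToType) ⊆ branch F b x := fun v hv ↦ by
    rw [branch_eq]
    exact ⟨accumulated_stage_mono F b hyx.le (branch_subset_accumulated F b y hv),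
      hbound (stage F b x) ⟨y, hyx⟩ hv⟩
  obtain ⟨w, hw, hwb⟩ := hgadget (stage F b x)
  refine (ssubset_iff_of_subset hsub).2 ⟨w, ?_, fun hwy ↦ ?_⟩
  · rw [branch_eq]
    exact ⟨gadget_subset_accumulated F _ hw, hwb⟩
  obtain ⟨z, hz⟩ := mem_iUnion.1 (branch_subset_accumulated F b y hwy)
  refine disjoint_left.1 (disjoint_gadget F hF fun h ↦ ?_) hz hw
  exact (lt_of_le_of_lt z.2 hyx).ne (congrArg Sigma.fst h)

variable {X : SimpleGraph lam.ord.ToType}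

theorem isClique_accumulated_stage
    (hadj : ∀ p q, (treeGraph X ρ).Adj p q → X.Adj (F p) (F q))
    {x : ν.ord.ToType} (hgood : ∀ z ≤ x, (stage F b z).IsGood X ρ) :
    X.IsClique (accumulated F (stage F b x)) := by
  rintro _ hv _ hw hvw
  obtain ⟨z₁, i, rfl⟩ := mem_iUnion.1 hv
  obtain ⟨z₂, j, rfl⟩ := mem_iUnion.1 hw
  refine hadj _ _ ⟨fun h ↦ hvw (congrArg F h), hgood _ z₁.2, hgood _ z₂.2, ?_⟩
  rcases le_total z₁.1 z₂.1 with h | h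
  · exact Or.inl ⟨h, fun _ ↦ rfl⟩
  · exact Or.inr ⟨h, fun _ ↦ rfl⟩

theorem isGood_stage (hF : Function.Injective F)
    (hadj : ∀ p q, (treeGraph X ρ).Adj p q → X.Adj (F p) (F q))
    (hbound : ∀ s y, (s.2 y : Set lam.ord.ToType) ⊆ Iio (b s))
    (hmk : ∀ s, ρ s.1 ≤ #(accumulated F s ∩ Iio (b s) : Set lam.ord.ToType))
    (hgadget : ∀ s, (gadget F s ∩ Iio (b s)).Nonempty) (x : ν.ord.ToType) :
    (stage F b x).IsGood X ρ := by
  induction x using WellFoundedLT.induction with | _ x ih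
  refine ⟨fun y ↦ ?_, fun y ↦ ?_, fun y z h ↦ branch_strictMono hF hbound hgadget h⟩
  · exact (isClique_accumulated_stage hadj fun z hz ↦ ih z (hz.trans_lt y.2)).subset
      (branch_subset_accumulated F b y)
  · exact le_mk_branch hmk y

end Branch

theorem not_injective_treeGraph_hom {κ : Cardinal.{u}} {X : SimpleGraph lam.ord.ToType}
    {ρ : ν.ord.ToType → Cardinal.{u}} (hX : ¬∃ K, X.IsClique K ∧ #K = κ)
    (hlam : IsStrongLimit lam) (hκ : ℵ₀ ≤ κ) (hν : ℵ₀ ≤ ν) (hνκ : ν ≤ κ.ord.cof)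
    (hνlam : ν ≤ lam.ord.cof) (hρ : ∀ x, succ (ρ x) < κ) (hκρ : κ ≤ ν ⊔ ⨆ x, ρ x)
    (hρlam : κ ≤ lam.ord.cof ∨ ∀ x, lam.ord.cof ≤ ρ x) (F : treeGraph X ρ →g X) :
    ¬Function.Injective F := by
  intro hF
  choose b hbound hmk hgadget using exists_bound F hlam hκ hν hνκ hνlam hρ hρlam hF
  have hgood := isGood_stage hF (fun _ _ ↦ F.map_adj) hbound hmk hgadget
  refine hX (SimpleGraph.exists_isClique_mk_eq_of_strictMono X hν hκρ
    (m := fun x ↦ (branch F b x : Set lam.ord.ToType)) (fun x ↦ ?_) (le_mk_branch hmk)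
    (branch_strictMono hF hbound hgadget))
  exact (isClique_accumulated_stage (fun _ _ ↦ F.map_adj) fun z _ ↦ hgood z).subset
    (branch_subset_accumulated F b x)

end WeaklyUniversalGraph

open Cardinal

theorem stmt4_general (lam kappa : Cardinal) (hsl : lam.IsStrongLimit)
    (hkappa : ℵ₀ ≤ kappa) (hkl : kappa ≤ lam)
    (hcf : kappa.ord.cof ≤ lam.ord.cof) :
    ¬ ∃ X : SimpleGraph (Quotient.out lam),
      (¬ ∃ s : Set (Quotient.out lam), X.IsClique s ∧ #s = kappa) ∧
      ∀ Y : SimpleGraph (Quotient.out lam),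
        (¬ ∃ s : Set (Quotient.out lam), Y.IsClique s ∧ #s = kappa) →
        ∃ f : Quotient.out lam → Quotient.out lam, Function.Injective f ∧
          ∀ a b, Y.Adj a b → X.Adj (f a) (f b) := by
  open WeaklyUniversalGraph SimpleGraph in
  rintro ⟨X, hX, hU⟩
  have hkappa₁ : 1 < kappa := one_lt_aleph0.trans_le hkappa
  obtain ⟨e⟩ : Nonempty (Quotient.out lam ≃ lam.ord.ToType) := Cardinal.eq.1 (by simp)
  have hXe : ¬∃ K, (X.map e.toEmbedding).IsClique K ∧ #K = kappa :=
    fun h ↦ hX (exists_isClique_mk_eq_of_map _ hkappa₁ h)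
  obtain ⟨ρ, hρ, hκρ, hρlam⟩ := exists_levelSizes hkappa hcf
  obtain ⟨ι⟩ : Nonempty (TreeVertex lam ρ ↪ Quotient.out lam) := (le_def _ _).1 <|
    (mk_treeVertex_le hsl hcf fun x ↦ (hρ x).le.trans hkl).trans_eq (mk_out lam).symm
  obtain ⟨f, hf, hfX⟩ := hU ((treeGraph (X.map e.toEmbedding) ρ).map ι) fun h ↦
    treeGraph_not_exists_isClique hXe hkappa (aleph0_le_cof_ord hkappa) le_rfl hρ hκρ
      (exists_isClique_mk_eq_of_map ι hkappa₁ h)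
  let F : treeGraph (X.map e.toEmbedding) ρ →g X.map e.toEmbedding :=
    (Iso.map e X).toHom.comp ((⟨f, hfX _ _⟩ : _ →g X).comp (Embedding.map ι _).toHom)
  exact not_injective_treeGraph_hom hXe hsl hkappa (aleph0_le_cof_ord hkappa) le_rfl hcf hρ hκρ
    hρlam F (e.injective.comp (hf.comp ι.injective))

/-- If `λ` is a singular strong limit cardinal, `κ ≤ λ` is infinite and
`cf(κ) ≤ cf(λ)`, then there is no weakly `(λ,κ)`-universal graph: no graph on a
vertex set of size `λ` with no clique of size `κ` into which every such graph
injectively and edge-preservingly embeds. -/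
theorem stmt4 (lam kappa : Cardinal) (hsl : lam.IsStrongLimit)
    (hsing : lam.ord.cof < lam) (hkappa : ℵ₀ ≤ kappa) (hkl : kappa ≤ lam)
    (hcf : kappa.ord.cof ≤ lam.ord.cof) :
    ¬ ∃ X : SimpleGraph (Quotient.out lam),
      (¬ ∃ s : Set (Quotient.out lam), X.IsClique s ∧ #s = kappa) ∧
      ∀ Y : SimpleGraph (Quotient.out lam),
        (¬ ∃ s : Set (Quotient.out lam), Y.IsClique s ∧ #s = kappa) →
        ∃ f : Quotient.out lam → Quotient.out lam, Function.Injective f ∧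
          ∀ a b, Y.Adj a b → X.Adj (f a) (f b) :=
  stmt4_general lam kappa hsl hkappa hkl hcf
end

section
/- Let λ be a strong limit cardinal and κ an infinite cardinal with κ < λ and cf(κ) > cf(λ). Then there exists a strongly (λ,κ)-universal graph: a graph on λ with no κ-clique such that every graph on λ with no κ-clique embeds into it by a map preserving both edges and non-edges. -/
/-!
Take as vertices the ordinals below `λ` and fix a cofinal set `C` of `cf λ` levels. A node at
level `c ∈ C` is a `κ`-clique-free graph on the initial segment `≤ c` together with a vertex; two
nodes are joined when the graph of the lower one is the restriction of the graph of the higher one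
and the two vertices are adjacent in the higher graph. A `κ`-clique-free graph `Y` embeds by sending
`v` to the node formed by any level `c ≥ v`, the restriction of `Y` to `≤ c`, and `v`. As `λ` is a
strong limit, there are only `λ` nodes. A clique of size `κ` would, since `cf κ > |C|`, have `κ`
members on a single level; these all carry the same graph, and their vertices form a `κ`-clique
in it.
-/

open Cardinal Set

universe u

namespace SimpleGraph

variable {V W : Type u} {G : SimpleGraph V} {κ : Cardinal.{u}}

def CliqueFreeCard (G : SimpleGraph V) (κ : Cardinal) : Prop :=
  ¬ ∃ s : Set V, G.IsClique s ∧ #s = κ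

theorem cliqueFreeCard_iff : G.CliqueFreeCard κ ↔ ∀ s, G.IsClique s → #s < κ := by
  refine ⟨fun h s hs => lt_of_not_ge fun hκ => ?_, fun h ⟨s, hs, hκ⟩ => (h s hs).ne hκ⟩
  obtain ⟨t, hts, rfl⟩ := le_mk_iff_exists_subset.mp hκ
  exact h ⟨t, IsClique.subset hts hs, rfl⟩

theorem CliqueFreeCard.mono {H : SimpleGraph V} (hle : G ≤ H) (h : H.CliqueFreeCard κ) :
    G.CliqueFreeCard κ :=
  fun ⟨s, hs, hκ⟩ => h ⟨s, hs.mono hle, hκ⟩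

theorem CliqueFreeCard.map (f : V ↪ W) (hκ : 1 < κ) (h : G.CliqueFreeCard κ) :
    (G.map f).CliqueFreeCard κ := by
  rintro ⟨t, ht, rfl⟩
  rcases isClique_map_iff.mp ht with hsub | ⟨s, hs, rfl⟩
  · exact hκ.not_ge (mk_le_one_iff_set_subsingleton.mpr hsub)
  · exact h ⟨s, hs, (mk_image_eq f.injective).symm⟩

theorem spanningCoe_induce_adj {s : Set V} {x y : V} :
    (G.induce s).spanningCoe.Adj x y ↔ G.Adj x y ∧ x ∈ s ∧ y ∈ s := by
  constructor
  · rintro ⟨-, ⟨x, hx⟩, ⟨y, hy⟩, hxy, rfl, rfl⟩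
    exact ⟨hxy, hx, hy⟩
  · rintro ⟨hxy, hx, hy⟩
    exact ⟨hxy.ne, ⟨x, hx⟩, ⟨y, hy⟩, hxy, rfl, rfl⟩

theorem spanningCoe_induce_spanningCoe_induce {s t : Set V} (hst : s ⊆ t) :
    ((G.induce t).spanningCoe.induce s).spanningCoe = (G.induce s).spanningCoe := by
  ext x y
  simp only [spanningCoe_induce_adj]
  exact ⟨fun ⟨⟨h, _⟩, hs⟩ => ⟨h, hs⟩, fun ⟨h, hx, hy⟩ => ⟨⟨h, hst hx, hst hy⟩, hx, hy⟩⟩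

theorem mk_support_subset_le (s : Set V) :
    #{G : SimpleGraph V // G.support ⊆ s} ≤ 2 ^ (#s * #s) := by
  refine (mk_le_of_injective (f := fun G : {G : SimpleGraph V // G.support ⊆ s} =>
    {z : s × s | G.1.Adj z.1 z.2}) ?_).trans_eq (by rw [mk_set, mk_prod, lift_id])
  rintro ⟨G, hG⟩ ⟨H, hH⟩ hGH
  ext x y
  refine ⟨fun h => ?_, fun h => ?_⟩
  · exact (Set.ext_iff.mp hGH (⟨x, hG h.left_mem_support⟩, ⟨y, hG h.right_mem_support⟩)).mp h
  · exact (Set.ext_iff.mp hGH (⟨x, hH h.left_mem_support⟩, ⟨y, hH h.right_mem_support⟩)).mpr h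

end SimpleGraph

open SimpleGraph

variable {α : Type u} [LinearOrder α] {κ : Cardinal.{u}} {C : Set α}

structure LevelNode (κ : Cardinal.{u}) (C : Set α) where
  level : C
  graph : SimpleGraph α
  vertex : α
  support_subset : graph.support ⊆ Iic (level : α)
  cliqueFreeCard : graph.CliqueFreeCard κ

namespace LevelNode

def Below (p q : LevelNode κ C) : Prop :=
  p.level ≤ q.level ∧ p.graph = (q.graph.induce (Iic (p.level : α))).spanningCoe ∧
    q.graph.Adj p.vertex q.vertex

variable (κ C) in
def universalGraph : SimpleGraph (LevelNode κ C) := fromRel Below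

theorem Below.of_level_eq {p q : LevelNode κ C} (h : Below p q) (hl : p.level = q.level) :
    p.graph = q.graph ∧ q.graph.Adj p.vertex q.vertex := by
  refine ⟨?_, h.2.2⟩
  rw [h.2.1, hl, spanningCoe_induce_eq_self]
  exact q.support_subset

theorem graph_eq_of_adj_of_level_eq {p q : LevelNode κ C} (h : (universalGraph κ C).Adj p q)
    (hl : p.level = q.level) : p.graph = q.graph ∧ p.graph.Adj p.vertex q.vertex := by
  rcases (fromRel_adj _ _ _).mp h with ⟨-, hpq | hqp⟩
  · obtain ⟨hG, hadj⟩ := hpq.of_level_eq hl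
    exact ⟨hG, hG ▸ hadj⟩
  · obtain ⟨hG, hadj⟩ := hqp.of_level_eq hl.symm
    exact ⟨hG.symm, hadj.symm⟩

theorem isClique_image_vertex {T : Set (LevelNode κ C)} (hT : (universalGraph κ C).IsClique T)
    {c : C} (hc : ∀ p ∈ T, p.level = c) {p₀ : LevelNode κ C} (hp₀ : p₀ ∈ T) :
    p₀.graph.IsClique (vertex '' T) ∧ InjOn vertex T := by
  have key : ∀ p ∈ T, ∀ q ∈ T, p ≠ q → p.graph = q.graph ∧ p.graph.Adj p.vertex q.vertex :=
    fun p hp q hq hpq =>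
      graph_eq_of_adj_of_level_eq (hT hp hq hpq) ((hc p hp).trans (hc q hq).symm)
  have graph_eq : ∀ p ∈ T, p.graph = p₀.graph := fun p hp => by
    rcases eq_or_ne p p₀ with rfl | hne
    · rfl
    · exact (key p hp p₀ hp₀ hne).1
  refine ⟨?_, fun p hp q hq hv => by_contra fun hpq => ?_⟩
  · rintro _ ⟨p, hp, rfl⟩ _ ⟨q, hq, rfl⟩ hne
    exact graph_eq p hp ▸ (key p hp q hq (ne_of_apply_ne _ hne)).2
  · exact (key p hp q hq hpq).2.ne hv

theorem universalGraph_cliqueFreeCard (hκ : ℵ₀ ≤ κ) (hC : #C < κ.ord.cof) :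
    (universalGraph κ C).CliqueFreeCard κ := by
  rintro ⟨t, ht, htκ⟩
  obtain ⟨c, T, hTt, hκT, hTc⟩ :=
    infinite_pigeonhole_set (fun p : t => p.1.level) κ htκ.ge hκ hC
  obtain ⟨p₀, hp₀⟩ : T.Nonempty :=
    nonempty_iff_ne_empty.mpr fun h => by simp [h, (aleph0_pos.trans_le hκ).ne'] at hκT
  obtain ⟨hclique, hinj⟩ := isClique_image_vertex (ht.subset hTt) (fun p hp => hTc hp) hp₀
  refine (cliqueFreeCard_iff.mp p₀.cliqueFreeCard _ hclique).not_ge ?_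
  rwa [mk_image_eq_of_injOn _ _ hinj]

theorem nonempty_embedding_universalGraph (hC : IsCofinal C) {Y : SimpleGraph α}
    (hY : Y.CliqueFreeCard κ) : Nonempty (Y ↪g universalGraph κ C) := by
  choose ℓ hℓC hℓ using hC
  let node (v : α) : LevelNode κ C :=
    { level := ⟨ℓ v, hℓC v⟩
      graph := (Y.induce (Iic (ℓ v))).spanningCoe
      vertex := v
      support_subset := by
        rw [support_spanningCoe]
        exact image_subset_iff.mpr fun x _ => x.2
      cliqueFreeCard := hY.mono (spanningCoe_induce_le _ _) }
  have below_iff (a b : α) : Below (node a) (node b) ↔ ℓ a ≤ ℓ b ∧ Y.Adj a b := by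
    refine ⟨fun h => ⟨h.1, (spanningCoe_induce_adj.mp h.2.2).1⟩, fun ⟨hab, h⟩ => ⟨hab, ?_, ?_⟩⟩
    · exact (spanningCoe_induce_spanningCoe_induce (Iic_subset_Iic.mpr hab)).symm
    · exact spanningCoe_induce_adj.mpr ⟨h, (hℓ a).trans hab, hℓ b⟩
  refine ⟨⟨⟨node, fun a b h => congrArg vertex h⟩, fun {a b} => ?_⟩⟩
  change (universalGraph κ C).Adj (node a) (node b) ↔ Y.Adj a b
  rw [universalGraph, fromRel_adj, below_iff, below_iff]
  refine ⟨fun ⟨_, h⟩ => h.elim And.right fun h => h.2.symm, fun h => ⟨?_, ?_⟩⟩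
  · exact fun hab => h.ne (congrArg vertex hab)
  · rcases le_total (ℓ a) (ℓ b) with hab | hba
    · exact Or.inl ⟨hab, h⟩
    · exact Or.inr ⟨hba, h.symm⟩

theorem mk_le_of_isStrongLimit {lam : Cardinal.{u}} (hlam : lam.IsStrongLimit) (hα : #α ≤ lam)
    (hIic : ∀ c : α, #(Iic c) < lam) : #(LevelNode κ C) ≤ lam := by
  have hlam₀ := hlam.aleph0_le
  have hgraphs (c : C) : #{G : SimpleGraph α // G.support ⊆ Iic (c : α)} * #α ≤ lam :=
    calc _ ≤ lam * lam :=
          mul_le_mul' ((mk_support_subset_le _).trans (hlam.isStrongPrelimit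
            (mul_lt_of_lt hlam₀ (hIic c) (hIic c))).le) hα
      _ = lam := mul_eq_self hlam₀
  let toSigma (p : LevelNode κ C) : Σ c : C, {G : SimpleGraph α // G.support ⊆ Iic (c : α)} × α :=
    ⟨p.level, ⟨p.graph, p.support_subset⟩, p.vertex⟩
  have toSigma_injective : Function.Injective toSigma := by
    rintro ⟨c, G, v, _, _⟩ ⟨c', G', v', _, _⟩ h
    obtain ⟨rfl, h⟩ := Sigma.mk.inj_iff.mp h
    obtain ⟨⟨rfl⟩, rfl⟩ := Prod.ext_iff.mp (eq_of_heq h)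
    rfl
  calc #(LevelNode κ C)
      ≤ sum fun c : C => #{G : SimpleGraph α // G.support ⊆ Iic (c : α)} * #α := by
        simpa [mk_sigma] using mk_le_of_injective toSigma_injective
    _ ≤ #C * lam := (sum_le_sum _ _ hgraphs).trans_eq (sum_const' _ _)
    _ ≤ lam * lam := mul_le_mul_left ((mk_set_le C).trans hα) lam
    _ = lam := mul_eq_self hlam₀

end LevelNode

open LevelNode in
theorem stmt5_general (lam kappa : Cardinal) (hsl : lam.IsStrongLimit)
    (hkappa : ℵ₀ ≤ kappa)
    (hcf : lam.ord.cof < kappa.ord.cof) :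
    ∃ X : SimpleGraph (Quotient.out lam),
      (¬ ∃ s : Set (Quotient.out lam), X.IsClique s ∧ #s = kappa) ∧
      ∀ Y : SimpleGraph (Quotient.out lam),
        (¬ ∃ s : Set (Quotient.out lam), Y.IsClique s ∧ #s = kappa) →
        ∃ f : Quotient.out lam → Quotient.out lam, Function.Injective f ∧
          ∀ a b, Y.Adj a b ↔ X.Adj (f a) (f b) := by
  have hmk : #lam.ord.ToType = lam := by rw [mk_toType, card_ord]
  have hIic (c : lam.ord.ToType) : #(Iic c) < lam :=
    (mk_Iic_lt c (by rw [hmk, Ordinal.type_toType]) (hmk.symm ▸ hsl.aleph0_le)).trans_eq hmk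
  obtain ⟨C, hCcof, hC⟩ := Order.exists_cof_eq lam.ord.ToType
  rw [Ordinal.cof_toType] at hC
  have hκ : 1 < kappa := one_lt_aleph0.trans_le hkappa
  obtain ⟨emb⟩ : Nonempty (LevelNode kappa C ↪ lam.out) :=
    (le_def _ _).mp ((mk_le_of_isStrongLimit hsl hmk.le hIic).trans_eq (mk_out lam).symm)
  obtain ⟨e⟩ : Nonempty (lam.out ≃ lam.ord.ToType) := Cardinal.eq.mp (by rw [mk_out, hmk])
  refine ⟨(universalGraph kappa C).map emb,
    (universalGraph_cliqueFreeCard hkappa (hC ▸ hcf)).map emb hκ, fun Y hY => ?_⟩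
  obtain ⟨f⟩ := nonempty_embedding_universalGraph hCcof
    (CliqueFreeCard.map e.toEmbedding hκ hY)
  let g : Y ↪g (universalGraph kappa C).map emb :=
    (Embedding.map e.toEmbedding Y).trans (f.trans (Embedding.map emb _))
  exact ⟨g, g.injective, fun a b => g.map_adj_iff.symm⟩

/-- If `λ` is a strong limit cardinal and `κ < λ` is infinite with
`cf(κ) > cf(λ)`, then there is a strongly `(λ,κ)`-universal graph: a graph on a
vertex set of size `λ` with no clique of size `κ` into which every such graph
embeds by an injective map preserving both edges and non-edges. -/
theorem stmt5 (lam kappa : Cardinal) (hsl : lam.IsStrongLimit)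
    (hkappa : ℵ₀ ≤ kappa) (hkl : kappa < lam)
    (hcf : lam.ord.cof < kappa.ord.cof) :
    ∃ X : SimpleGraph (Quotient.out lam),
      (¬ ∃ s : Set (Quotient.out lam), X.IsClique s ∧ #s = kappa) ∧
      ∀ Y : SimpleGraph (Quotient.out lam),
        (¬ ∃ s : Set (Quotient.out lam), Y.IsClique s ∧ #s = kappa) →
        ∃ f : Quotient.out lam → Quotient.out lam, Function.Injective f ∧
          ∀ a b, Y.Adj a b ↔ X.Adj (f a) (f b) :=
  stmt5_general lam kappa hsl hkappa hcf
end

section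
/- Let λ be a singular strong limit cardinal and let κ ≤ λ with cf(κ) ≤ cf(λ) and κ > cf(λ). Fix an increasing sequence of regular cardinals κ_α (α < cf(κ)) cofinal in κ with κ_0 > cf(λ). Let F be the set of functions f with domain an ordinal < cf(κ) such that f(α) is a bounded subset of λ of cardinality κ_α for each α ∈ dom(f), and ∪{f(α) : α < dom(f)} is a clique in a given K(κ)-free graph X on λ. Let Y have vertex set the disjoint union of sets A(f) (f ∈ F) with |A(f)| = κ_{dom(f)}, two distinct vertices being joined iff they lie in A(f), A(f') with f ⊆ f' or f' ⊆ f. Then Y has no clique of cardinality κ. -/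
open Cardinal

/-- An element of the family `F`: a function `f` whose domain is (an initial
segment determined by) an ordinal `< cf(κ)`, assigning to each `α` in its
domain a bounded subset of `λ` of cardinality `κ_α`, such that the union of its
values is a clique of `X`. Here `λ` is represented by its initial ordinal's
canonical type, and `cf(κ)` likewise. -/
structure FFun (lam kappa : Cardinal) (k : (kappa.ord.cof).ord.ToType → Cardinal)
    (X : SimpleGraph lam.ord.ToType) where
  dom : (kappa.ord.cof).ord.ToType
  fn : {a : (kappa.ord.cof).ord.ToType // a < dom} → Set lam.ord.ToType
  bdd : ∀ a, BddAbove (fn a)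
  card : ∀ a, #(fn a) = k a.1
  clique : X.IsClique (⋃ a, fn a)

/-- `f` is extended by `g` (as functions). -/
def FFun.Sub {lam kappa : Cardinal} {k : (kappa.ord.cof).ord.ToType → Cardinal}
    {X : SimpleGraph lam.ord.ToType} (f g : FFun lam kappa k X) : Prop :=
  ∃ h : f.dom ≤ g.dom, ∀ a : {a : (kappa.ord.cof).ord.ToType // a < f.dom},
    f.fn a = g.fn ⟨a.1, lt_of_lt_of_le a.2 h⟩

/-- The graph `Y`: vertex set the disjoint union of sets `A(f)` (`f ∈ F`) with
`|A(f)| = κ_{dom f}`; two distinct vertices are joined iff one's index function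
is contained in the other's. -/
noncomputable def YGraph (lam kappa : Cardinal)
    (k : (kappa.ord.cof).ord.ToType → Cardinal) (X : SimpleGraph lam.ord.ToType) :
    SimpleGraph (Σ f : FFun lam kappa k X, Quotient.out (k f.dom)) :=
  SimpleGraph.fromRel (fun u v => FFun.Sub u.1 v.1)

/-- Two functions with equal domains, one extending the other, are equal. -/
theorem FFun.eq_of_sub_of_dom_eq {lam kappa : Cardinal}
    {k : (kappa.ord.cof).ord.ToType → Cardinal} {X : SimpleGraph lam.ord.ToType}
    {f g : FFun lam kappa k X} (hs : f.Sub g) (hd : f.dom = g.dom) : f = g := by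
  obtain ⟨d, fn, bdd, card, clique⟩ := f
  obtain ⟨d', fn', bdd', card', clique'⟩ := g
  obtain ⟨h, hfn⟩ := hs
  dsimp at hd
  subst hd
  have hfn' : fn = fn' := by
    funext a
    exact (hfn a).trans (congrArg fn' (Subtype.ext rfl))
  subst hfn'
  rfl

/-- If `λ` is a singular strong limit, `κ ≤ λ` with `cf(κ) ≤ cf(λ)` and
`κ > cf(λ)`, `κ_α` (`α < cf(κ)`) is an increasing sequence of regular cardinals
cofinal in `κ` with all `κ_α > cf(λ)`, and `X` is a `K(κ)`-free graph on `λ`,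
then the graph `Y` has no clique of cardinality `κ`. -/
theorem stmt11 (lam kappa : Cardinal) (hsl : lam.IsStrongLimit)
    (hsing : lam.ord.cof < lam) (hkl : kappa ≤ lam)
    (hcf : kappa.ord.cof ≤ lam.ord.cof) (hk0 : lam.ord.cof < kappa)
    (k : (kappa.ord.cof).ord.ToType → Cardinal)
    (hkmono : StrictMono k) (hkreg : ∀ a, (k a).IsRegular)
    (hkbig : ∀ a, lam.ord.cof < k a) (hklt : ∀ a, k a < kappa)
    (hkcof : ∀ c < kappa, ∃ a, c ≤ k a)
    (X : SimpleGraph lam.ord.ToType)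
    (hX : ¬ ∃ s : Set lam.ord.ToType, X.IsClique s ∧ #s = kappa) :
    ¬ ∃ s : Set (Σ f : FFun lam kappa k X, Quotient.out (k f.dom)),
      (YGraph lam kappa k X).IsClique s ∧ #s = kappa := by
  rintro ⟨s, hclq, hcard⟩
  -- basic cardinal facts
  have hκinf : ℵ₀ ≤ kappa :=
    le_trans (Ordinal.aleph0_le_cof.2 (Cardinal.isSuccLimit_ord hsl.aleph0_le)) hk0.le
  have hcfκinf : ℵ₀ ≤ kappa.ord.cof :=
    Ordinal.aleph0_le_cof.2 (Cardinal.isSuccLimit_ord hκinf)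
  have hcfκltκ : kappa.ord.cof < kappa := lt_of_le_of_lt hcf hk0
  haveI : NoMaxOrder (kappa.ord.cof).ord.ToType := Cardinal.noMaxOrder hcfκinf
  -- the set of first components
  set Γ : Set (FFun lam kappa k X) := Sigma.fst '' s with hΓ
  -- pairwise comparability
  have hcomp : ∀ f ∈ Γ, ∀ g ∈ Γ, f = g ∨ f.Sub g ∨ g.Sub f := by
    rintro f ⟨u, hu, rfl⟩ g ⟨v, hv, rfl⟩
    by_cases huv : u = v
    · exact Or.inl (congrArg Sigma.fst huv)
    · have hadj := hclq hu hv huv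
      rw [YGraph, SimpleGraph.fromRel_adj] at hadj
      exact Or.inr hadj.2
  -- dom is injective on Γ
  have hdominj : ∀ f ∈ Γ, ∀ g ∈ Γ, f.dom = g.dom → f = g := by
    intro f hf g hg hd
    rcases hcomp f hf g hg with h | h | h
    · exact h
    · exact FFun.eq_of_sub_of_dom_eq h hd
    · exact (FFun.eq_of_sub_of_dom_eq h hd.symm).symm
  have hΓcard : #Γ ≤ kappa.ord.cof := by
    have : #Γ ≤ #((kappa.ord.cof).ord.ToType) :=
      Cardinal.mk_le_of_injective (f := fun f : Γ => f.1.dom)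
        (fun f g h => Subtype.ext (hdominj f.1 f.2 g.1 g.2 h))
    rwa [Cardinal.mk_toType, Cardinal.card_ord] at this
  by_cases hbdd : ∃ a : (kappa.ord.cof).ord.ToType, ∀ f ∈ Γ, f.dom ≤ a
  · -- bounded case: s is too small
    obtain ⟨a, ha⟩ := hbdd
    have hinj : Function.Injective
        (fun u : s => (⟨⟨u.1.1, ⟨u.1, u.2, rfl⟩⟩, u.1.2⟩ :
          Σ f : Γ, Quotient.out (k f.1.dom))) := by
      intro u v h
      apply Subtype.ext
      have := congrArg (fun p : Σ f : Γ, Quotient.out (k f.1.dom) => (⟨p.1.1, p.2⟩ :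
          Σ f : FFun lam kappa k X, Quotient.out (k f.dom))) h
      simpa using this
    have h1 : #s ≤ Cardinal.sum (fun f : Γ => k f.1.dom) := by
      have := Cardinal.mk_le_of_injective hinj
      rw [Cardinal.mk_sigma] at this
      simpa only [Cardinal.mk_out] using this
    have h2 : Cardinal.sum (fun f : Γ => k f.1.dom) ≤ #Γ * k a := by
      rw [← Cardinal.sum_const']
      exact Cardinal.sum_le_sum _ _ (fun f => hkmono.monotone (ha f.1 f.2))
    have h3 : #Γ * k a < kappa :=
      Cardinal.mul_lt_of_lt hκinf (lt_of_le_of_lt hΓcard hcfκltκ) (hklt a)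
    exact absurd hcard (ne_of_lt (lt_of_le_of_lt (h1.trans h2) h3))
  · -- unbounded case: build a κ-clique in X
    push_neg at hbdd
    set C : Set lam.ord.ToType := ⋃ f ∈ Γ, ⋃ a, f.fn a with hC
    have hCclq : X.IsClique C := by
      intro x hx y hy hxy
      simp only [hC, Set.mem_iUnion] at hx hy
      obtain ⟨f, hf, a, hxa⟩ := hx
      obtain ⟨g, hg, b, hyb⟩ := hy
      rcases hcomp f hf g hg with h | h | h
      · subst h
        exact f.clique (Set.mem_iUnion.2 ⟨a, hxa⟩) (Set.mem_iUnion.2 ⟨b, hyb⟩) hxy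
      · obtain ⟨hle, hfn⟩ := h
        refine g.clique (Set.mem_iUnion.2 ⟨⟨a.1, lt_of_lt_of_le a.2 hle⟩, ?_⟩)
          (Set.mem_iUnion.2 ⟨b, hyb⟩) hxy
        rw [← hfn a]; exact hxa
      · obtain ⟨hle, hfn⟩ := h
        refine f.clique (Set.mem_iUnion.2 ⟨a, hxa⟩)
          (Set.mem_iUnion.2 ⟨⟨b.1, lt_of_lt_of_le b.2 hle⟩, ?_⟩) hxy
        rw [← hfn b]; exact hyb
    have hCcard : kappa ≤ #C := by
      refine le_of_forall_lt (fun c hc => ?_)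
      obtain ⟨a, hca⟩ := hkcof c hc
      obtain ⟨b, hab⟩ := exists_gt a
      obtain ⟨f, hf, hbf⟩ := hbdd b
      have hsub : f.fn ⟨b, hbf⟩ ⊆ C := by
        intro x hx
        simp only [hC, Set.mem_iUnion]
        exact ⟨f, hf, ⟨b, hbf⟩, hx⟩
      calc c ≤ k a := hca
        _ < k b := hkmono hab
        _ = #(f.fn ⟨b, hbf⟩) := (f.card ⟨b, hbf⟩).symm
        _ ≤ #C := Cardinal.mk_le_mk_of_subset hsub
    obtain ⟨t, hts, htc⟩ := Cardinal.le_mk_iff_exists_subset.1 hCcard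
    exact hX ⟨t, hCclq.subset hts, htc⟩
end

section
/- Let λ be a cardinal of countable cofinality, with square sequence ⟨C_δ : δ < λ⁺ limit⟩ (C_δ ⊆ δ club, |C_δ| < λ⁺ is strengthened to |C_δ| < λ, and coherence: if γ is a limit point of C_δ then C_γ = γ ∩ C_δ), cardinals λ_n ↗ λ, and injections φ_{α,β} : [α,β) → λ for α < β < λ⁺. Call a countable A ⊆ λ⁺ of limit order type 'low' if, setting δ = sup A and ⟨c_ξ⟩ the increasing enumeration of C_δ, there is n < ω with φ_{c_ξ, c_{ξ+1}}(a) < λ_n whenever a ∈ A and c_ξ ≤ a < c_{ξ+1}. Then for every B ⊆ λ⁺ of order type ω₁ there is a cofinal B' ⊆ B such that for every limit point γ < sup(B') of B', the set B' ∩ γ is low. -/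
/-!
Let `δ = sup B`; it is below `λ⁺` because `λ > ℵ₀` (`C_ω` is infinite and `|C_ω| < λ`).
Colour each `b < δ` by an `n` with `φ_{c,c'}(b) < λ_n`, where `[c, c')` is the interval of `C_δ`
containing `b`. As `B` has order type `ω₁`, some colour `N` is cofinal in `B`. Taking, for each
`c ∈ C_δ`, the least `N`-coloured element of `B` above `c` gives a cofinal `B'` whose elements are
pairwise separated by points of `C_δ`. Hence a limit point `γ` of `B'` is a limit point of `C_δ`,
so `C_γ = C_δ ∩ γ` by coherence, and the intervals of `C_γ` meeting `B' ∩ γ` are intervals of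
`C_δ`, on which colour `N` bounds `φ` by `λ_N`.
-/

open Cardinal

/-- `γ` is a limit point of the set of ordinals `s`. -/
def IsLimitPt (s : Set Ordinal) (γ : Ordinal) : Prop :=
  0 < γ ∧ ∀ β < γ, ∃ c ∈ s, β < c ∧ c < γ

/-- `c, c'` are consecutive elements of the set of ordinals `s`. -/
def Consec (s : Set Ordinal) (c c' : Ordinal) : Prop :=
  c ∈ s ∧ c' ∈ s ∧ c < c' ∧ ∀ x ∈ s, ¬ (c < x ∧ x < c')

/-- `A` is low: it is countable of limit order type, and with `δ = sup A` there
is `n < ω` such that `φ_{c_ξ,c_{ξ+1}}(a) < λ_n` whenever `a ∈ A` lies between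
consecutive elements `c_ξ ≤ a < c_{ξ+1}` of `C_δ`. -/
def IsLow (C : Ordinal → Set Ordinal) (l : ℕ → Cardinal)
    (phi : Ordinal → Ordinal → Ordinal → Ordinal) (A : Set Ordinal) : Prop :=
  A.Countable ∧ Order.IsSuccLimit (Ordinal.type ((· < ·) : ↥A → ↥A → Prop)) ∧
  ∃ n : ℕ, ∀ a ∈ A, ∀ c c', Consec (C (sSup A)) c c' → c ≤ a → a < c' →
    phi c c' a < (l n).ord

open Set Order
open scoped Ordinal

universe u

def PhiBelow (S : Set Ordinal) (phi : Ordinal → Ordinal → Ordinal → Ordinal) (κ a : Ordinal) :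
    Prop :=
  ∀ c c', Consec S c c' → c ≤ a → a < c' → phi c c' a < κ

def SeparatedBy (S T : Set Ordinal) : Prop :=
  ∀ x ∈ T, ∀ y ∈ T, x < y → ∃ c ∈ S, x < c ∧ c ≤ y

lemma Consec.eq_of_mem_Ico {s : Set Ordinal} {c₁ c₁' c₂ c₂' a : Ordinal}
    (h₁ : Consec s c₁ c₁') (h₂ : Consec s c₂ c₂') (ha₁ : a ∈ Ico c₁ c₁') (ha₂ : a ∈ Ico c₂ c₂') :
    c₁ = c₂ ∧ c₁' = c₂' := by
  obtain ⟨hc₁, hc₁', -, h₁⟩ := h₁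
  obtain ⟨hc₂, hc₂', -, h₂⟩ := h₂
  constructor
  · exact le_antisymm (not_lt.1 fun h => h₂ c₁ hc₁ ⟨h, ha₁.1.trans_lt ha₂.2⟩)
      (not_lt.1 fun h => h₁ c₂ hc₂ ⟨h, ha₂.1.trans_lt ha₁.2⟩)
  · exact le_antisymm (not_lt.1 fun h => h₁ c₂' hc₂' ⟨ha₁.1.trans_lt ha₂.2, h⟩)
      (not_lt.1 fun h => h₂ c₁' hc₁' ⟨ha₂.1.trans_lt ha₁.2, h⟩)

lemma Consec.of_inter_Iio {s : Set Ordinal} {c c' γ : Ordinal} (h : Consec (s ∩ Iio γ) c c') :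
    Consec s c c' :=
  ⟨h.1.1, h.2.1.1, h.2.2.1, fun x hx hcx => h.2.2.2 x ⟨hx, hcx.2.trans h.2.1.2⟩ hcx⟩

lemma isSuccLimit_csSup {α : Type*} [ConditionallyCompleteLinearOrder α] {s : Set α}
    (hne : s.Nonempty) (hbdd : BddAbove s) (hmax : ∀ a ∈ s, ∃ b ∈ s, a < b) :
    IsSuccLimit (sSup s) := by
  by_contra h
  obtain ⟨b, hb, hlt⟩ := hmax _ (csSup_mem_of_not_isSuccLimit hne hbdd h)
  exact (le_csSup hbdd hb).not_gt hlt

lemma infinite_of_subset_Iio_of_forall_exists_gt {S : Set Ordinal} {δ : Ordinal} (hδ : 0 < δ)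
    (hS : S ⊆ Iio δ) (hunb : ∀ β < δ, ∃ c ∈ S, β < c) : S.Infinite := by
  intro hfin
  obtain ⟨c, hc, -⟩ := hunb 0 hδ
  obtain ⟨m, hm, hmax⟩ := hfin.exists_maximal ⟨c, hc⟩
  obtain ⟨c', hc', hmc'⟩ := hunb m (hS hm)
  exact hmc'.not_ge (hmax hc' hmc'.le)

section WellOrder

variable {α : Type*} [LinearOrder α] [WellFoundedLT α]

lemma isSuccLimit_type_iff : IsSuccLimit (typeLT α) ↔ Nonempty α ∧ NoMaxOrder α := by
  rw [Ordinal.isSuccLimit_iff, Ordinal.isSuccPrelimit_type_lt_iff,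
    Ordinal.type_ne_zero_iff_nonempty]

variable (hα : typeLT α = (ℵ₁ : Cardinal).ord)
include hα

lemma countable_Iio_of_type_eq_aleph_one (x : α) : (Iio x).Countable := by
  have hcard : #α = ℵ₁ := by rw [← Ordinal.card_type (α := α) (· < ·), hα, card_ord]
  rw [← le_aleph0_iff_set_countable, ← lt_aleph_one_iff, ← hcard]
  exact card_typein_lt (r := (· < ·)) x (by rw [hcard, hα])

lemma exists_forall_lt_of_countable_of_type_eq_aleph_one {s : Set α} (hs : s.Countable) :
    ∃ x, ∀ y ∈ s, y < x := by
  by_contra! h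
  have hcof : Order.cof α = ℵ₁ := by
    rw [← Ordinal.cof_type, hα, isRegular_aleph_one.cof_ord]
  have : Order.cof α ≤ ℵ₀ := (Order.cof_le h).trans (mk_le_aleph0_iff.2 hs.to_subtype)
  exact (hcof ▸ this).not_gt aleph0_lt_aleph_one

end WellOrder

section TypeAlephOne

variable {B : Set Ordinal.{u}} (hB : typeLT B = (ℵ₁ : Cardinal).ord)
include hB

lemma exists_gt_of_type_eq_aleph_one {b : Ordinal.{u}} (hb : b ∈ B) : ∃ b' ∈ B, b < b' := by
  have := (isSuccLimit_type_iff.1 (hB ▸ isSuccLimit_ord (aleph0_le_aleph 1))).2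
  obtain ⟨b', h⟩ := exists_gt (⟨b, hb⟩ : B)
  exact ⟨b', b'.2, h⟩

lemma lt_csSup_of_type_eq_aleph_one (hbdd : BddAbove B) {b : Ordinal.{u}} (hb : b ∈ B) :
    b < sSup B :=
  let ⟨_, hb', hbb'⟩ := exists_gt_of_type_eq_aleph_one hB hb
  hbb'.trans_le (le_csSup hbdd hb')

lemma isSuccLimit_csSup_of_type_eq_aleph_one (hbdd : BddAbove B) : IsSuccLimit (sSup B) := by
  have hne := (isSuccLimit_type_iff.1 (hB ▸ isSuccLimit_ord (aleph0_le_aleph 1))).1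
  exact isSuccLimit_csSup (nonempty_coe_sort.1 hne) hbdd
    fun _ hb => exists_gt_of_type_eq_aleph_one hB hb

lemma countable_of_forall_lt_mem_of_type_eq_aleph_one {A : Set Ordinal.{u}} (hAB : A ⊆ B)
    {b : Ordinal.{u}} (hb : b ∈ B) (hA : ∀ a ∈ A, a < b) : A.Countable := by
  refine ((countable_Iio_of_type_eq_aleph_one hB (⟨b, hb⟩ : B)).image Subtype.val).mono ?_
  intro a ha
  exact ⟨⟨a, hAB ha⟩, hA a ha, rfl⟩

lemma exists_isCofinalFor_of_type_eq_aleph_one {P : ℕ → Ordinal.{u} → Prop}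
    (hP : ∀ b ∈ B, ∃ n, P n b) : ∃ N, IsCofinalFor B {b ∈ B | P N b} := by
  by_contra! h
  simp only [IsCofinalFor, not_forall, not_exists, not_and] at h
  choose f hfB hf using h
  obtain ⟨x, hx⟩ := exists_forall_lt_of_countable_of_type_eq_aleph_one hB
    (countable_range fun n => (⟨f n, hfB n⟩ : B))
  obtain ⟨n, hn⟩ := hP x x.2
  exact hf n x ⟨x.2, hn⟩ (hx _ ⟨n, rfl⟩).le

lemma sSup_lt_ord_succ_of_type_eq_aleph_one {lam : Cardinal.{u}} (hlam : ℵ₀ < lam)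
    (hBsub : B ⊆ Iio (succ lam).ord) : sSup B < (succ lam).ord := by
  refine Ordinal.sSup_lt_of_lt_cof ?_ hBsub
  rw [← Ordinal.lift_cof, (isRegular_succ hlam.le).cof_ord, ← Ordinal.card_type (α := B) (· < ·),
    hB, card_ord, lift_succ, ← succ_aleph0, succ_lt_succ_iff, ← lift_aleph0.{u + 1, u}, lift_lt]
  exact hlam

end TypeAlephOne

lemma exists_phiBelow {lam : Cardinal.{u}} {l : ℕ → Cardinal.{u}} (hlsup : ⨆ n, l n = lam)
    {S : Set Ordinal.{u}} {phi : Ordinal.{u} → Ordinal.{u} → Ordinal.{u} → Ordinal.{u}}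
    (hphi : ∀ c c', Consec S c c' → ∀ x ∈ Ico c c', phi c c' x < lam.ord) (a : Ordinal.{u}) :
    ∃ n, PhiBelow S phi (l n).ord a := by
  by_cases h : ∃ c c', Consec S c c' ∧ a ∈ Ico c c'
  · obtain ⟨c, c', hcc', ha⟩ := h
    have hlt : (phi c c' a).card < ⨆ n, l n := hlsup ▸ lt_ord.1 (hphi c c' hcc' a ha)
    obtain ⟨n, hn⟩ := exists_lt_of_lt_ciSup hlt
    refine ⟨n, fun d d' hdd' hda had' => ?_⟩
    obtain ⟨rfl, rfl⟩ := hdd'.eq_of_mem_Ico hcc' ⟨hda, had'⟩ ha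
    exact lt_ord.2 hn
  · exact ⟨0, fun c c' hcc' hca hac' => (h ⟨c, c', hcc', hca, hac'⟩).elim⟩

lemma exists_separatedBy_subset {S T : Set Ordinal.{u}} (hST : IsCofinalFor S T) :
    ∃ T' ⊆ T, IsCofinalFor S T' ∧ SeparatedBy S T' := by
  set f : Ordinal.{u} → Ordinal.{u} := fun c => sInf {b ∈ T | c ≤ b}
  have hf : ∀ c ∈ S, f c ∈ T ∧ c ≤ f c := fun c hc =>
    csInf_mem (hST hc : ∃ b ∈ T, c ≤ b)
  refine ⟨f '' S, ?_, fun c hc => ⟨f c, mem_image_of_mem f hc, (hf c hc).2⟩, ?_⟩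
  · rintro _ ⟨c, hc, rfl⟩
    exact (hf c hc).1
  · rintro x ⟨c, hc, rfl⟩ _ ⟨c', hc', rfl⟩ hlt
    refine ⟨c', hc', not_le.1 fun hc'x => hlt.not_ge ?_, (hf c' hc').2⟩
    exact csInf_le (OrderBot.bddBelow _) ⟨(hf c hc).1, hc'x⟩

namespace IsLimitPt

variable {T : Set Ordinal.{u}} {γ : Ordinal.{u}} (hγ : IsLimitPt T γ)
include hγ

lemma of_separatedBy {S : Set Ordinal.{u}} (hsep : SeparatedBy S T) : IsLimitPt S γ := by
  refine ⟨hγ.1, fun β hβ => ?_⟩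
  obtain ⟨x, hx, hβx, hxγ⟩ := hγ.2 β hβ
  obtain ⟨y, hy, hxy, hyγ⟩ := hγ.2 x hxγ
  obtain ⟨c, hc, hxc, hcy⟩ := hsep x hx y hy hxy
  exact ⟨c, hc, hβx.trans hxc, hcy.trans_lt hyγ⟩

lemma sSup_inter_Iio : sSup (T ∩ Iio γ) = γ := by
  refine le_antisymm (csSup_le' fun a ha => ha.2.le) (not_lt.1 fun h => ?_)
  obtain ⟨a, ha, hsa, haγ⟩ := hγ.2 _ h
  exact hsa.not_ge (le_csSup ⟨γ, fun b hb => hb.2.le⟩ ⟨ha, haγ⟩)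

lemma isSuccLimit_type_inter_Iio : IsSuccLimit (typeLT ↥(T ∩ Iio γ)) := by
  refine isSuccLimit_type_iff.2 ⟨?_, ⟨fun a => ?_⟩⟩
  · obtain ⟨a, ha, -, haγ⟩ := hγ.2 0 hγ.1
    exact ⟨⟨a, ha, haγ⟩⟩
  · obtain ⟨b, hb, hab, hbγ⟩ := hγ.2 a a.2.2
    exact ⟨⟨b, hb, hbγ⟩, hab⟩

end IsLimitPt

lemma isLow_inter_Iio {C : Ordinal.{u} → Set Ordinal.{u}} {l : ℕ → Cardinal.{u}}
    {phi : Ordinal.{u} → Ordinal.{u} → Ordinal.{u} → Ordinal.{u}} {S T : Set Ordinal.{u}}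
    {γ : Ordinal.{u}} {N : ℕ} (hγ : IsLimitPt T γ) (hcount : (T ∩ Iio γ).Countable)
    (hCγ : C γ = S ∩ Iio γ) (hT : ∀ a ∈ T, PhiBelow S phi (l N).ord a) :
    IsLow C l phi (T ∩ Iio γ) := by
  refine ⟨hcount, hγ.isSuccLimit_type_inter_Iio, N, fun a ha c c' hcc' => ?_⟩
  rw [hγ.sSup_inter_Iio, hCγ] at hcc'
  exact hT a ha.1 c c' hcc'.of_inter_Iio

theorem stmt14_general (lam : Cardinal.{0}) (hlam : ℵ₀ ≤ lam)
    (C : Ordinal → Set Ordinal)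
    (hCsub : ∀ δ, δ < (Order.succ lam).ord → Order.IsSuccLimit δ → C δ ⊆ Set.Iio δ)
    (hCunb : ∀ δ, δ < (Order.succ lam).ord → Order.IsSuccLimit δ →
      ∀ β < δ, ∃ c ∈ C δ, β < c)
    (hCcard : ∀ δ, δ < (Order.succ lam).ord → Order.IsSuccLimit δ →
      #(C δ) < Cardinal.lift.{1} lam)
    (hCcoh : ∀ δ, δ < (Order.succ lam).ord → Order.IsSuccLimit δ →
      ∀ γ < δ, IsLimitPt (C δ) γ → C γ = C δ ∩ Set.Iio γ)
    (l : ℕ → Cardinal) (hlsup : (⨆ n, l n) = lam)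
    (phi : Ordinal → Ordinal → Ordinal → Ordinal)
    (hphiLt : ∀ α β, α < β → β < (Order.succ lam).ord →
      ∀ x ∈ Set.Ico α β, phi α β x < lam.ord) :
    ∀ B : Set Ordinal, B ⊆ Set.Iio (Order.succ lam).ord →
      Ordinal.type ((· < ·) : ↥B → ↥B → Prop) = (Cardinal.aleph 1 : Cardinal.{1}).ord →
      ∃ B', B' ⊆ B ∧ (∀ b ∈ B, ∃ b' ∈ B', b ≤ b') ∧
        ∀ γ, γ < sSup B' → IsLimitPt B' γ → IsLow C l phi (B' ∩ Set.Iio γ) := by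
  intro B hBsub hB
  have hω : ω < (succ lam).ord := by
    rw [lt_ord, Ordinal.card_omega0]
    exact hlam.trans_lt (lt_succ lam)
  have hlam₀ : ℵ₀ < lam := by
    have hCω := infinite_of_subset_Iio_of_forall_exists_gt Ordinal.omega0_pos
      (hCsub ω hω Ordinal.isSuccLimit_omega0) (hCunb ω hω Ordinal.isSuccLimit_omega0)
    rw [← Cardinal.lift_lt.{0, 1}, lift_aleph0]
    exact (infinite_iff.1 hCω.to_subtype).trans_lt (hCcard ω hω Ordinal.isSuccLimit_omega0)
  have hBbdd : BddAbove B := ⟨_, fun b hb => (hBsub hb).le⟩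
  set δ := sSup B
  have hBδ : ∀ b ∈ B, b < δ := fun _ => lt_csSup_of_type_eq_aleph_one hB hBbdd
  have hδlim : IsSuccLimit δ := isSuccLimit_csSup_of_type_eq_aleph_one hB hBbdd
  have hδ : δ < (succ lam).ord := sSup_lt_ord_succ_of_type_eq_aleph_one hB hlam₀ hBsub
  have hCB : IsCofinalFor (C δ) B := fun c hc =>
    let ⟨b, hb, hcb⟩ := exists_lt_of_lt_csSup' (hCsub δ hδ hδlim hc); ⟨b, hb, hcb.le⟩
  have hBC : IsCofinalFor B (C δ) := fun b hb =>
    let ⟨c, hc, hbc⟩ := hCunb δ hδ hδlim b (hBδ b hb); ⟨c, hc, hbc.le⟩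
  obtain ⟨N, hN⟩ := exists_isCofinalFor_of_type_eq_aleph_one hB fun b _ =>
    exists_phiBelow hlsup (fun c c' hcc' => hphiLt c c' hcc'.2.2.1
      ((hCsub δ hδ hδlim hcc'.2.1).trans hδ)) b
  obtain ⟨B', hB'N, hCB', hsep⟩ := exists_separatedBy_subset (hCB.trans hN)
  refine ⟨B', fun b hb => (hB'N hb).1, hBC.trans hCB', fun γ hγ hγB' => ?_⟩
  obtain ⟨b₀, hb₀, hγb₀⟩ := exists_lt_of_lt_csSup' hγ
  refine isLow_inter_Iio hγB' ?_ ?_ fun a ha => (hB'N ha).2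
  · exact countable_of_forall_lt_mem_of_type_eq_aleph_one hB (fun a ha => (hB'N ha.1).1)
      (hB'N hb₀).1 fun a ha => ha.2.trans hγb₀
  · exact hCcoh δ hδ hδlim γ (hγb₀.trans (hBδ b₀ (hB'N hb₀).1)) (hγB'.of_separatedBy hsep)

/-- Given `cf(λ) = ω`, a `□_λ`-sequence `⟨C_δ⟩` (with `|C_δ| < λ`), cardinals
`λ_n ↗ λ` and injections `φ_{α,β} : [α,β) → λ`: every `B ⊆ λ⁺` of order type
`ω₁` has a cofinal subset `B'` all of whose proper initial segments at limit
points are low. -/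
theorem stmt14 (lam : Cardinal.{0}) (hlam : ℵ₀ ≤ lam) (hcf : lam.ord.cof = ℵ₀)
    (C : Ordinal → Set Ordinal)
    (hCsub : ∀ δ, δ < (Order.succ lam).ord → Order.IsSuccLimit δ → C δ ⊆ Set.Iio δ)
    (hCunb : ∀ δ, δ < (Order.succ lam).ord → Order.IsSuccLimit δ →
      ∀ β < δ, ∃ c ∈ C δ, β < c)
    (hCcl : ∀ δ, δ < (Order.succ lam).ord → Order.IsSuccLimit δ →
      ∀ γ < δ, IsLimitPt (C δ) γ → γ ∈ C δ)
    (hCcard : ∀ δ, δ < (Order.succ lam).ord → Order.IsSuccLimit δ →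
      #(C δ) < Cardinal.lift.{1} lam)
    (hCcoh : ∀ δ, δ < (Order.succ lam).ord → Order.IsSuccLimit δ →
      ∀ γ < δ, IsLimitPt (C δ) γ → C γ = C δ ∩ Set.Iio γ)
    (l : ℕ → Cardinal) (hl : StrictMono l) (hlsup : (⨆ n, l n) = lam)
    (phi : Ordinal → Ordinal → Ordinal → Ordinal)
    (hphiInj : ∀ α β, α < β → β < (Order.succ lam).ord →
      Set.InjOn (phi α β) (Set.Ico α β))
    (hphiLt : ∀ α β, α < β → β < (Order.succ lam).ord →
      ∀ x ∈ Set.Ico α β, phi α β x < lam.ord) :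
    ∀ B : Set Ordinal, B ⊆ Set.Iio (Order.succ lam).ord →
      Ordinal.type ((· < ·) : ↥B → ↥B → Prop) = (Cardinal.aleph 1 : Cardinal.{1}).ord →
      ∃ B', B' ⊆ B ∧ (∀ b ∈ B, ∃ b' ∈ B', b ≤ b') ∧
        ∀ γ, γ < sSup B' → IsLimitPt B' γ → IsLow C l phi (B' ∩ Set.Iio γ) :=
  stmt14_general lam hlam C hCsub hCunb hCcard hCcoh l hlsup phi hphiLt
end

section
/- Let κ be an infinite cardinal and X a graph on a linearly ordered vertex set V that is the union of sets A(t) indexed by nodes t of a tree T of height cf(λ), where edges only go between A(t), A(t') for comparable t, t'. Suppose cf(κ) > cf(λ) ≥ the length of every branch of T, and for each t the graph restricted to ∪{A(s) : s ≤ t} has no clique of cardinality κ. Then X has no clique of cardinality κ. -/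
open Cardinal Set

/-
Choosing for each vertex of a clique an index `t` with `v ∈ A t`, any two distinct vertices are
adjacent, so their indices are comparable: the clique is covered by the sets `A t` along a single
chain of `T`. That chain has fewer than `cf(κ)` elements, so by the pigeonhole principle one
`A t` already contains `κ` vertices of the clique, a `κ`-clique inside `⋃ t' ≤ t, A t'`.
-/

theorem SimpleGraph.IsClique.exists_isChain_subset_biUnion {V T : Type*} [LE T]
    {G : SimpleGraph V} {A : T → Set V} (hcov : ⋃ t, A t = Set.univ)
    (hedge : ∀ v w, G.Adj v w → ∀ t t', v ∈ A t → w ∈ A t' → t ≤ t' ∨ t' ≤ t)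
    {s : Set V} (hs : G.IsClique s) :
    ∃ C : Set T, IsChain (· ≤ ·) C ∧ s ⊆ ⋃ t ∈ C, A t := by
  have hmem (v : s) : ∃ t, (v : V) ∈ A t := mem_iUnion.mp (hcov ▸ mem_univ _)
  choose f hf using hmem
  refine ⟨range f, ?_, fun v hv => mem_biUnion (mem_range_self ⟨v, hv⟩) (hf ⟨v, hv⟩)⟩
  rintro _ ⟨v, rfl⟩ _ ⟨w, rfl⟩ hne
  have hvw : (v : V) ≠ w := fun h => hne (congrArg f (Subtype.ext h))
  exact hedge _ _ (hs v.2 w.2 hvw) _ _ (hf v) (hf w)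

theorem Cardinal.exists_mk_inter_eq_of_subset_biUnion {β ι : Type u} {s : Set β}
    {A : ι → Set β} {C : Set ι} (hsC : s ⊆ ⋃ i ∈ C, A i) (hs : ℵ₀ ≤ #s)
    (hC : #C < (#s).ord.cof) : ∃ i ∈ C, #(s ∩ A i : Set β) = #s := by
  have hmem (x : s) : ∃ i : C, (x : β) ∈ A i := by
    simpa only [mem_iUnion, exists_prop, Subtype.exists] using hsC x.2
  choose f hf using hmem
  obtain ⟨i, t, hts, hst, hfi⟩ := infinite_pigeonhole_set f #s le_rfl hs hC
  have hti : t ⊆ s ∩ A i := fun x hx => ⟨hts hx, hfi hx ▸ hf ⟨x, hts hx⟩⟩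
  exact ⟨i, i.2, le_antisymm (mk_le_mk_of_subset inter_subset_left)
    (hst.trans (mk_le_mk_of_subset hti))⟩

theorem stmt18_general (kappa lam : Cardinal) (hkappa : ℵ₀ ≤ kappa)
    (hcf : lam.ord.cof < kappa.ord.cof)
    (T : Type) [PartialOrder T] (V : Type)
    (X : SimpleGraph V) (A : T → Set V)
    (hcov : (⋃ t, A t) = Set.univ)
    (hedge : ∀ v w, X.Adj v w → ∀ t t', v ∈ A t → w ∈ A t' → t ≤ t' ∨ t' ≤ t)
    (hchain : ∀ c : Set T, IsChain (· ≤ ·) c → #c ≤ lam.ord.cof)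
    (hfree : ∀ t, ¬ ∃ s : Set V,
      s ⊆ (⋃ t' ≤ t, A t') ∧ X.IsClique s ∧ #s = kappa) :
    ¬ ∃ s : Set V, X.IsClique s ∧ #s = kappa := by
  rintro ⟨s, hs, rfl⟩
  obtain ⟨C, hC, hsC⟩ := hs.exists_isChain_subset_biUnion hcov hedge
  obtain ⟨t, -, hst⟩ :=
    exists_mk_inter_eq_of_subset_biUnion hsC hkappa ((hchain C hC).trans_lt hcf)
  exact hfree t ⟨s ∩ A t, fun v hv => mem_biUnion le_rfl hv.2,
    hs.subset inter_subset_left, hst⟩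

/-- Let `κ` be infinite, `X` a graph on a linearly ordered vertex set `V`
covered by sets `A t` indexed by a tree `T` whose chains (branches) have
cardinality at most `cf(λ) < cf(κ)`, with edges only between comparably indexed
sets, and such that for each `t` the restriction of `X` to the initial union
`⋃_{t' ≤ t} A t'` has no clique of cardinality `κ`. Then `X` has no clique of
cardinality `κ`. -/
theorem stmt18 (kappa lam : Cardinal) (hkappa : ℵ₀ ≤ kappa)
    (hcf : lam.ord.cof < kappa.ord.cof)
    (T : Type) [PartialOrder T] (V : Type) [LinearOrder V]
    (X : SimpleGraph V) (A : T → Set V)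
    (hcov : (⋃ t, A t) = Set.univ)
    (hedge : ∀ v w, X.Adj v w → ∀ t t', v ∈ A t → w ∈ A t' → t ≤ t' ∨ t' ≤ t)
    (hchain : ∀ c : Set T, IsChain (· ≤ ·) c → #c ≤ lam.ord.cof)
    (hfree : ∀ t, ¬ ∃ s : Set V,
      s ⊆ (⋃ t' ≤ t, A t') ∧ X.IsClique s ∧ #s = kappa) :
    ¬ ∃ s : Set V, X.IsClique s ∧ #s = kappa :=
  stmt18_general kappa lam hkappa hcf T V X A hcov hedge hchain hfree
end
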